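/- arXiv:2412.06055 — 4 statements merged into one kernel-verified Lean document; each statement's English description precedes it below -/
import Mathlib

section
/- Every surjective endomorphism of a finitely generated free Steiner quasigroup is an automorphism. -/
/-- A Steiner quasigroup: a commutative, idempotent binary structure
with `x * (x * y) = y`. -/
class Steiner (M : Type) extends Mul M where
  comm : ∀ x y : M, x * y = y * x
  idem : ∀ x : M, x * x = x
  lcancel : ∀ x y : M, x * (x * y) = y

namespace Steiner

variable {M : Type} [Steiner M]

/-- Membership in the subquasigroup generated by `A`. -/
inductive mem_closure (A : Set M) : M → Prop
  | base {a : M} : a ∈ A → mem_closure A a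
  | mul {a b : M} : mem_closure A a → mem_closure A b → mem_closure A (a * b)

/-- The subquasigroup generated by `A`. -/
def closure (A : Set M) : Set M := {x | mem_closure A x}

instance (A : Set M) : Steiner (closure A) where
  mul a b := ⟨a.1 * b.1, a.2.mul b.2⟩
  comm a b := Subtype.ext (Steiner.comm a.1 b.1)
  idem a := Subtype.ext (Steiner.idem a.1)
  lcancel a b := Subtype.ext (Steiner.lcancel a.1 b.1)

/-- `A` is independent: the generated subquasigroup has the universal mapping
property over `A` with respect to the class of Steiner quasigroups. -/
def Independent (A : Set M) : Prop :=
  ∀ (N : Type) [Steiner N] (f : A → N),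
    ∃ g : closure A →ₙ* N, ∀ a : A, g ⟨a.1, mem_closure.base a.2⟩ = f a

/-- A tuple is independent if its entries are pairwise distinct and its
range is an independent set. -/
def IndepTuple {ι : Type} (a : ι → M) : Prop :=
  Function.Injective a ∧ Independent (Set.range a)

/-- `A` is a free base of `M`: it generates `M` and `M` has the universal
mapping property over `A`. -/
def FreeBase (A : Set M) : Prop :=
  closure A = Set.univ ∧
  ∀ (N : Type) [Steiner N] (f : A → N),
    ∃ g : M →ₙ* N, ∀ a : A, g a.1 = f a

/-- Terms in the language with one binary operation. -/
inductive Term (α : Type) where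
  | var : α → Term α
  | mul : Term α → Term α → Term α

/-- Evaluation of a term at an assignment. -/
def Term.eval {α : Type} (e : α → M) : Term α → M
  | .var x => e x
  | .mul t s => t.eval e * s.eval e

/-- Equivalence of terms generated by applications of commutativity to subterms. -/
inductive TEquiv {α : Type} : Term α → Term α → Prop
  | refl (t : Term α) : TEquiv t t
  | symm {t s : Term α} : TEquiv t s → TEquiv s t
  | trans {t s u : Term α} : TEquiv t s → TEquiv s u → TEquiv t u
  | comm (t s : Term α) : TEquiv (.mul t s) (.mul s t)
  | congr {t t' s s' : Term α} : TEquiv t t' → TEquiv s s' →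
      TEquiv (.mul t s) (.mul t' s')

/-- The subterm relation. -/
inductive Subterm {α : Type} : Term α → Term α → Prop
  | refl (t : Term α) : Subterm t t
  | left {s t r : Term α} : Subterm s t → Subterm s (.mul t r)
  | right {s t r : Term α} : Subterm s t → Subterm s (.mul r t)

/-- A term is reduced if it contains no subterm of the forms `t₁·t₂` with
`t₁ ∼ t₂`, `t₁·(t₂·t₃)` with `t₁ ∼ t₂` or `t₁ ∼ t₃`, or `(t₁·t₂)·t₃` with
`t₁ ∼ t₃` or `t₂ ∼ t₃`. -/
def Reduced {α : Type} (t : Term α) : Prop :=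
  (∀ t1 t2 : Term α, Subterm (.mul t1 t2) t → ¬ TEquiv t1 t2) ∧
  (∀ t1 t2 t3 : Term α, Subterm (.mul t1 (.mul t2 t3)) t →
      ¬ TEquiv t1 t2 ∧ ¬ TEquiv t1 t3) ∧
  (∀ t1 t2 t3 : Term α, Subterm (.mul (.mul t1 t2) t3) t →
      ¬ TEquiv t1 t3 ∧ ¬ TEquiv t2 t3)

/-- The rank of a term. -/
def Term.rank {α : Type} : Term α → ℕ
  | .var _ => 0
  | .mul t s => max t.rank s.rank + 1

/-- Number of occurrences of a variable in a term. -/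
def Term.occ {α : Type} [DecidableEq α] (x : α) : Term α → ℕ
  | .var y => if y = x then 1 else 0
  | .mul t s => t.occ x + s.occ x

/-- The variable `x` occurs in the term. -/
inductive Occurs {α : Type} (x : α) : Term α → Prop
  | var : Occurs x (.var x)
  | left {t s : Term α} : Occurs x t → Occurs x (.mul t s)
  | right {t s : Term α} : Occurs x s → Occurs x (.mul t s)

/-- The levels of `M` over `A`. -/
def level (A : Set M) : ℕ → Set M
  | 0 => A
  | n + 1 => {z | ∃ a ∈ level A n, ∃ b ∈ level A n, z = a * b}

/-- `S` is a standard free construction over `A`. -/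
def StdFree (A : Set M) (S : ℕ → Set M) : Prop :=
  S 0 = A ∧
  (∀ n, S (n + 1) = {z | ∃ a ∈ S n, ∃ b ∈ S n, z = a * b}) ∧
  (∀ a ∈ S 0, ∀ b ∈ S 0, a ≠ b → a * b ∉ S 0) ∧
  (∀ n, ∀ a ∈ S (n + 1), a ∉ S n → ∀ b ∈ S (n + 1), b ∉ S n → a ≠ b →
    a * b ∉ S (n + 1)) ∧
  (∀ n, ∀ a ∈ S (n + 1), a ∉ S n → ∃ b ∈ S n, ∃ c ∈ S n, b ≠ c ∧ a = b * c ∧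
    ∀ b' ∈ S n, ∀ c' ∈ S n, b' ≠ c' → a = b' * c' → ({b', c'} : Set M) = {b, c})

theorem eval_mem_closure {α : Type} {A : Set M} (e : α → M) (h : ∀ x, e x ∈ A) :
    ∀ t : Term α, t.eval e ∈ closure A
  | .var x => mem_closure.base (h x)
  | .mul t s => mem_closure.mul (eval_mem_closure e h t) (eval_mem_closure e h s)


/-! ### Auxiliary term lemmas -/

variable {α : Type}

/-- Number of leaves of a term. -/
def Term.size : Term α → ℕ
  | .var _ => 1
  | .mul t s => t.size + s.size

theorem Term.size_pos : ∀ t : Term α, 0 < t.size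
  | .var _ => Nat.one_pos
  | .mul t s => Nat.add_pos_left t.size_pos _

theorem TEquiv.rank_eq {t s : Term α} (h : TEquiv t s) : t.rank = s.rank := by
  induction h with
  | refl => rfl
  | symm _ ih => omega
  | trans _ _ ih1 ih2 => omega
  | comm t s => simp [Term.rank, Nat.max_comm]
  | congr _ _ ih1 ih2 => simp [Term.rank, ih1, ih2]

theorem TEquiv.size_eq {t s : Term α} (h : TEquiv t s) : t.size = s.size := by
  induction h with
  | refl => rfl
  | symm _ ih => omega
  | trans _ _ ih1 ih2 => omega
  | comm t s => simp [Term.size, Nat.add_comm]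
  | congr _ _ ih1 ih2 => simp [Term.size, ih1, ih2]

theorem TEquiv.eval_eq {M : Type} [Steiner M] (e : α → M) {t s : Term α}
    (h : TEquiv t s) : t.eval e = s.eval e := by
  induction h with
  | refl => rfl
  | symm _ ih => exact ih.symm
  | trans _ _ ih1 ih2 => exact ih1.trans ih2
  | comm t s => exact Steiner.comm _ _
  | congr _ _ ih1 ih2 => simp [Term.eval, ih1, ih2]

private def DecompP (t s : Term α) : Prop :=
  ∀ t1 t2, t = Term.mul t1 t2 → ∃ s1 s2, s = Term.mul s1 s2 ∧
      ((TEquiv t1 s1 ∧ TEquiv t2 s2) ∨ (TEquiv t1 s2 ∧ TEquiv t2 s1))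

private theorem TEquiv.decomp2 {t s : Term α} (h : TEquiv t s) :
    DecompP t s ∧ DecompP s t := by
  induction h with
  | refl t =>
    constructor <;> exact fun t1 t2 ht => ⟨t1, t2, ht, Or.inl ⟨.refl _, .refl _⟩⟩
  | symm _ ih => exact ⟨ih.2, ih.1⟩
  | trans h1 h2 ih1 ih2 =>
    constructor
    · intro t1 t2 ht
      rcases ih1.1 t1 t2 ht with ⟨s1, s2, rfl, hcs⟩
      rcases ih2.1 s1 s2 rfl with ⟨u1, u2, rfl, hcu⟩
      refine ⟨u1, u2, rfl, ?_⟩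
      rcases hcs with ⟨ha, hb⟩ | ⟨ha, hb⟩ <;> rcases hcu with ⟨hc, hd⟩ | ⟨hc, hd⟩
      · exact Or.inl ⟨ha.trans hc, hb.trans hd⟩
      · exact Or.inr ⟨ha.trans hc, hb.trans hd⟩
      · exact Or.inr ⟨ha.trans hd, hb.trans hc⟩
      · exact Or.inl ⟨ha.trans hd, hb.trans hc⟩
    · intro t1 t2 ht
      rcases ih2.2 t1 t2 ht with ⟨s1, s2, rfl, hcs⟩
      rcases ih1.2 s1 s2 rfl with ⟨u1, u2, rfl, hcu⟩
      refine ⟨u1, u2, rfl, ?_⟩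
      rcases hcs with ⟨ha, hb⟩ | ⟨ha, hb⟩ <;> rcases hcu with ⟨hc, hd⟩ | ⟨hc, hd⟩
      · exact Or.inl ⟨ha.trans hc, hb.trans hd⟩
      · exact Or.inr ⟨ha.trans hc, hb.trans hd⟩
      · exact Or.inr ⟨ha.trans hd, hb.trans hc⟩
      · exact Or.inl ⟨ha.trans hd, hb.trans hc⟩
  | comm t s =>
    constructor <;>
      · intro t1 t2 ht
        injection ht with h1 h2
        subst h1; subst h2
        exact ⟨_, _, rfl, Or.inr ⟨.refl _, .refl _⟩⟩
  | congr h1 h2 ih1 ih2 =>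
    constructor
    · intro t1 t2 ht
      injection ht with e1 e2
      subst e1; subst e2
      exact ⟨_, _, rfl, Or.inl ⟨h1, h2⟩⟩
    · intro t1 t2 ht
      injection ht with e1 e2
      subst e1; subst e2
      exact ⟨_, _, rfl, Or.inl ⟨h1.symm, h2.symm⟩⟩

theorem TEquiv.mul_decomp {t1 t2 s : Term α} (h : TEquiv (.mul t1 t2) s) :
    ∃ s1 s2, s = Term.mul s1 s2 ∧
      ((TEquiv t1 s1 ∧ TEquiv t2 s2) ∨ (TEquiv t1 s2 ∧ TEquiv t2 s1)) :=
  h.decomp2.1 t1 t2 rfl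

private theorem TEquiv.var_eq' {t s : Term α} (h : TEquiv t s) :
    (∀ x, t = Term.var x → s = Term.var x) ∧ (∀ x, s = Term.var x → t = Term.var x) := by
  induction h with
  | refl t => exact ⟨fun x h => h, fun x h => h⟩
  | symm _ ih => exact ⟨ih.2, ih.1⟩
  | trans _ _ ih1 ih2 => exact ⟨fun x h => ih2.1 x (ih1.1 x h), fun x h => ih1.2 x (ih2.2 x h)⟩
  | comm t s => exact ⟨fun x h => (nomatch h), fun x h => (nomatch h)⟩
  | congr _ _ _ _ => exact ⟨fun x h => (nomatch h), fun x h => (nomatch h)⟩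

theorem TEquiv.var_eq {x : α} {s : Term α} (h : TEquiv (.var x) s) : s = .var x :=
  h.var_eq'.1 x rfl

theorem TEquiv.var_inj {x y : α} (h : TEquiv (.var x) (.var y)) : x = y := by
  have := h.var_eq; injection this.symm

theorem Subterm.trans' {a b c : Term α} (h1 : Subterm a b) (h2 : Subterm b c) :
    Subterm a c := by
  induction h2 with
  | refl => exact h1
  | left _ ih => exact .left ih
  | right _ ih => exact .right ih

theorem Reduced.of_subterm {s t : Term α} (hs : Subterm s t) (h : Reduced t) :
    Reduced s :=
  ⟨fun t1 t2 hsub => h.1 t1 t2 (hsub.trans' hs),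
   fun t1 t2 t3 hsub => h.2.1 t1 t2 t3 (hsub.trans' hs),
   fun t1 t2 t3 hsub => h.2.2 t1 t2 t3 (hsub.trans' hs)⟩

theorem subterm_mul_elim {u t s : Term α} (h : Subterm u (.mul t s)) :
    u = Term.mul t s ∨ Subterm u t ∨ Subterm u s := by
  cases h with
  | refl => exact .inl rfl
  | left h => exact .inr (.inl h)
  | right h => exact .inr (.inr h)

theorem Reduced.left {a b : Term α} (h : Reduced (.mul a b)) : Reduced a :=
  h.of_subterm (.left (.refl a))

theorem Reduced.right {a b : Term α} (h : Reduced (.mul a b)) : Reduced b :=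
  h.of_subterm (.right (.refl b))

theorem reduced_mul_iff {a b : Term α} :
    Reduced (.mul a b) ↔
      Reduced a ∧ Reduced b ∧ ¬ TEquiv a b ∧
      (∀ b1 b2, b = Term.mul b1 b2 → ¬ TEquiv a b1 ∧ ¬ TEquiv a b2) ∧
      (∀ a1 a2, a = Term.mul a1 a2 → ¬ TEquiv a1 b ∧ ¬ TEquiv a2 b) := by
  constructor
  · intro h
    refine ⟨h.left, h.right, h.1 a b (.refl _), ?_, ?_⟩
    · rintro b1 b2 rfl; exact h.2.1 a b1 b2 (.refl _)
    · rintro a1 a2 rfl; exact h.2.2 a1 a2 b (.refl _)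
  · rintro ⟨ha, hb, hab, hbc, hac⟩
    refine ⟨?_, ?_, ?_⟩
    · intro t1 t2 hsub
      rcases subterm_mul_elim hsub with heq | hsub | hsub
      · injection heq with e1 e2; subst e1; subst e2; exact hab
      · exact ha.1 t1 t2 hsub
      · exact hb.1 t1 t2 hsub
    · intro t1 t2 t3 hsub
      rcases subterm_mul_elim hsub with heq | hsub | hsub
      · injection heq with e1 e2; subst e1; exact hbc t2 t3 e2.symm
      · exact ha.2.1 t1 t2 t3 hsub
      · exact hb.2.1 t1 t2 t3 hsub
    · intro t1 t2 t3 hsub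
      rcases subterm_mul_elim hsub with heq | hsub | hsub
      · injection heq with e1 e2; subst e2; exact hac t1 t2 e1.symm
      · exact ha.2.2 t1 t2 t3 hsub
      · exact hb.2.2 t1 t2 t3 hsub

theorem reduced_var (x : α) : Reduced (Term.var x : Term α) :=
  ⟨fun t1 t2 h => (nomatch h), fun t1 t2 t3 h => (nomatch h), fun t1 t2 t3 h => (nomatch h)⟩

private theorem Reduced.tequiv' {t s : Term α} (h : TEquiv t s) :
    (Reduced t → Reduced s) ∧ (Reduced s → Reduced t) := by
  induction h with
  | refl t => exact ⟨id, id⟩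
  | symm _ ih => exact ⟨ih.2, ih.1⟩
  | trans _ _ ih1 ih2 => exact ⟨fun h => ih2.1 (ih1.1 h), fun h => ih1.2 (ih2.2 h)⟩
  | comm t s =>
    constructor <;>
      · intro h
        rw [reduced_mul_iff] at h ⊢
        obtain ⟨ha, hb, hab, hbc, hac⟩ := h
        refine ⟨hb, ha, fun h' => hab h'.symm, ?_, ?_⟩
        · intro b1 b2 hb'
          obtain ⟨h1, h2⟩ := hac b1 b2 hb'
          exact ⟨fun h' => h1 h'.symm, fun h' => h2 h'.symm⟩
        · intro a1 a2 ha'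
          obtain ⟨h1, h2⟩ := hbc a1 a2 ha'
          exact ⟨fun h' => h1 h'.symm, fun h' => h2 h'.symm⟩
  | congr h1 h2 ih1 ih2 =>
    constructor
    · intro h
      rw [reduced_mul_iff] at h ⊢
      obtain ⟨ha, hb, hab, hbc, hac⟩ := h
      refine ⟨ih1.1 ha, ih2.1 hb, fun h' => hab ((h1.trans h').trans h2.symm), ?_, ?_⟩
      · intro b1 b2 hb'
        subst hb'
        rcases h2.symm.mul_decomp with ⟨s1, s2, rfl, ⟨e1, e2⟩ | ⟨e1, e2⟩⟩ <;>
          obtain ⟨c1, c2⟩ := hbc s1 s2 rfl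
        · exact ⟨fun h' => c1 (h1.trans (h'.trans e1)), fun h' => c2 (h1.trans (h'.trans e2))⟩
        · exact ⟨fun h' => c2 (h1.trans (h'.trans e1)), fun h' => c1 (h1.trans (h'.trans e2))⟩
      · intro a1 a2 ha'
        subst ha'
        rcases h1.symm.mul_decomp with ⟨s1, s2, rfl, ⟨e1, e2⟩ | ⟨e1, e2⟩⟩ <;>
          obtain ⟨c1, c2⟩ := hac s1 s2 rfl
        · exact ⟨fun h' => c1 (e1.symm.trans (h'.trans h2.symm)),
                 fun h' => c2 (e2.symm.trans (h'.trans h2.symm))⟩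
        · exact ⟨fun h' => c2 (e1.symm.trans (h'.trans h2.symm)),
                 fun h' => c1 (e2.symm.trans (h'.trans h2.symm))⟩
    · intro h
      rw [reduced_mul_iff] at h ⊢
      obtain ⟨ha, hb, hab, hbc, hac⟩ := h
      refine ⟨ih1.2 ha, ih2.2 hb, fun h' => hab ((h1.symm.trans h').trans h2), ?_, ?_⟩
      · intro b1 b2 hb'
        subst hb'
        rcases h2.mul_decomp with ⟨s1, s2, rfl, ⟨e1, e2⟩ | ⟨e1, e2⟩⟩ <;>
          obtain ⟨c1, c2⟩ := hbc s1 s2 rfl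
        · exact ⟨fun h' => c1 (h1.symm.trans (h'.trans e1)),
                 fun h' => c2 (h1.symm.trans (h'.trans e2))⟩
        · exact ⟨fun h' => c2 (h1.symm.trans (h'.trans e1)),
                 fun h' => c1 (h1.symm.trans (h'.trans e2))⟩
      · intro a1 a2 ha'
        subst ha'
        rcases h1.mul_decomp with ⟨s1, s2, rfl, ⟨e1, e2⟩ | ⟨e1, e2⟩⟩ <;>
          obtain ⟨c1, c2⟩ := hac s1 s2 rfl
        · exact ⟨fun h' => c1 (e1.symm.trans (h'.trans h2)),
                 fun h' => c2 (e2.symm.trans (h'.trans h2))⟩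
        · exact ⟨fun h' => c2 (e1.symm.trans (h'.trans h2)),
                 fun h' => c1 (e2.symm.trans (h'.trans h2))⟩

theorem Reduced.tequiv {t s : Term α} (h : TEquiv t s) (ht : Reduced t) : Reduced s :=
  (Reduced.tequiv' h).1 ht

end Steiner

/-! ### The multiplication on reduced terms -/

namespace Steiner
variable {α : Type}

attribute [local instance] Classical.propDecidable

/-- Multiplication of reduced terms with cancellation. -/
noncomputable def smul (u v : Term α) : Term α :=
  if TEquiv u v then u
  else
    match v with
    | .mul v1 v2 =>
      if TEquiv u v1 then v2
      else if TEquiv u v2 then v1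
      else
        match u with
        | .mul u1 u2 =>
          if TEquiv (.mul v1 v2) u1 then u2
          else if TEquiv (.mul v1 v2) u2 then u1
          else .mul u (.mul v1 v2)
        | .var x => .mul (.var x) (.mul v1 v2)
    | .var y =>
      match u with
      | .mul u1 u2 =>
        if TEquiv (.var y) u1 then u2
        else if TEquiv (.var y) u2 then u1
        else .mul u (.var y)
      | .var x => .mul (.var x) (.var y)

theorem smul_cases (u v : Term α) (hu : Reduced u) (hv : Reduced v) :
    (TEquiv u v ∧ smul u v = u) ∨
    (∃ v1 v2, v = Term.mul v1 v2 ∧ TEquiv u v1 ∧ smul u v = v2) ∨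
    (∃ v1 v2, v = Term.mul v1 v2 ∧ TEquiv u v2 ∧ smul u v = v1) ∨
    (∃ u1 u2, u = Term.mul u1 u2 ∧ TEquiv v u1 ∧ smul u v = u2) ∨
    (∃ u1 u2, u = Term.mul u1 u2 ∧ TEquiv v u2 ∧ smul u v = u1) ∨
    (Reduced (.mul u v) ∧ smul u v = .mul u v) := by
  by_cases h0 : TEquiv u v
  · exact Or.inl ⟨h0, by simp [smul, h0]⟩
  match v with
  | .mul v1 v2 =>
    by_cases h1 : TEquiv u v1
    · exact Or.inr (Or.inl ⟨v1, v2, rfl, h1, by simp [smul, h0, h1]⟩)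
    by_cases h2 : TEquiv u v2
    · exact Or.inr (Or.inr (Or.inl ⟨v1, v2, rfl, h2, by simp [smul, h0, h1, h2]⟩))
    match u with
    | .mul u1 u2 =>
      by_cases h3 : TEquiv (.mul v1 v2) u1
      · exact Or.inr (Or.inr (Or.inr (Or.inl ⟨u1, u2, rfl, h3, by simp [smul, h0, h1, h2, h3]⟩)))
      by_cases h4 : TEquiv (.mul v1 v2) u2
      · exact Or.inr (Or.inr (Or.inr (Or.inr (Or.inl
          ⟨u1, u2, rfl, h4, by simp [smul, h0, h1, h2, h3, h4]⟩))))
      refine Or.inr (Or.inr (Or.inr (Or.inr (Or.inr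
        ⟨?_, by simp [smul, h0, h1, h2, h3, h4]⟩))))
      rw [reduced_mul_iff]
      refine ⟨hu, hv, h0, ?_, ?_⟩
      · intro b1 b2 hb; injection hb with e1 e2; subst e1; subst e2; exact ⟨h1, h2⟩
      · intro a1 a2 ha; injection ha with e1 e2; subst e1; subst e2
        exact ⟨fun h => h3 h.symm, fun h => h4 h.symm⟩
    | .var x =>
      refine Or.inr (Or.inr (Or.inr (Or.inr (Or.inr
        ⟨?_, by simp [smul, h0, h1, h2]⟩))))
      rw [reduced_mul_iff]
      refine ⟨hu, hv, h0, ?_, ?_⟩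
      · intro b1 b2 hb; injection hb with e1 e2; subst e1; subst e2; exact ⟨h1, h2⟩
      · intro a1 a2 ha; exact (nomatch ha)
  | .var y =>
    match u with
    | .mul u1 u2 =>
      by_cases h3 : TEquiv (.var y) u1
      · exact Or.inr (Or.inr (Or.inr (Or.inl ⟨u1, u2, rfl, h3, by simp [smul, h0, h3]⟩)))
      by_cases h4 : TEquiv (.var y) u2
      · exact Or.inr (Or.inr (Or.inr (Or.inr (Or.inl
          ⟨u1, u2, rfl, h4, by simp [smul, h0, h3, h4]⟩))))
      refine Or.inr (Or.inr (Or.inr (Or.inr (Or.inr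
        ⟨?_, by simp [smul, h0, h3, h4]⟩))))
      rw [reduced_mul_iff]
      refine ⟨hu, hv, h0, ?_, ?_⟩
      · intro b1 b2 hb; exact (nomatch hb)
      · intro a1 a2 ha; injection ha with e1 e2; subst e1; subst e2
        exact ⟨fun h => h3 h.symm, fun h => h4 h.symm⟩
    | .var x =>
      refine Or.inr (Or.inr (Or.inr (Or.inr (Or.inr
        ⟨?_, by simp [smul, h0]⟩))))
      rw [reduced_mul_iff]
      refine ⟨hu, hv, h0, ?_, ?_⟩
      · intro b1 b2 hb; exact (nomatch hb)
      · intro a1 a2 ha; exact (nomatch ha)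

theorem not_tequiv_of_rank {t s : Term α} (h : t.rank ≠ s.rank) : ¬ TEquiv t s :=
  fun h' => h h'.rank_eq

theorem smul_self (u : Term α) : smul u u = u := by simp [smul, TEquiv.refl]

theorem smul_reduced {u v : Term α} (hu : Reduced u) (hv : Reduced v) :
    Reduced (smul u v) := by
  rcases smul_cases u v hu hv with ⟨_, e⟩ | ⟨v1, v2, rfl, _, e⟩ | ⟨v1, v2, rfl, _, e⟩ |
    ⟨u1, u2, rfl, _, e⟩ | ⟨u1, u2, rfl, _, e⟩ | ⟨hr, e⟩ <;> rw [e]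
  · exact hu
  · exact hv.right
  · exact hv.left
  · exact hu.right
  · exact hu.left
  · exact hr

theorem smul_eval {M : Type} [Steiner M] (e : α → M) {u v : Term α}
    (hu : Reduced u) (hv : Reduced v) :
    (smul u v).eval e = u.eval e * v.eval e := by
  rcases smul_cases u v hu hv with ⟨h, eq⟩ | ⟨v1, v2, rfl, h, eq⟩ | ⟨v1, v2, rfl, h, eq⟩ |
    ⟨u1, u2, rfl, h, eq⟩ | ⟨u1, u2, rfl, h, eq⟩ | ⟨hr, eq⟩ <;> rw [eq]
  · rw [h.eval_eq e, Steiner.idem]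
  · rw [show Term.eval e (.mul v1 v2) = v1.eval e * v2.eval e from rfl,
      h.eval_eq e, Steiner.lcancel]
  · rw [show Term.eval e (.mul v1 v2) = v1.eval e * v2.eval e from rfl,
      h.eval_eq e, Steiner.comm (v1.eval e), Steiner.lcancel]
  · rw [show Term.eval e (.mul u1 u2) = u1.eval e * u2.eval e from rfl,
      ← h.eval_eq e, Steiner.comm _ (v.eval e), Steiner.lcancel]
  · rw [show Term.eval e (.mul u1 u2) = u1.eval e * u2.eval e from rfl, ← h.eval_eq e,
      Steiner.comm _ (v.eval e), Steiner.comm (u1.eval e), Steiner.lcancel]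
  · rfl

theorem smul_default {u v : Term α} (h : Reduced (.mul u v)) : smul u v = .mul u v := by
  have hm := reduced_mul_iff.mp h
  rcases smul_cases u v h.left h.right with ⟨h0, e⟩ | ⟨v1, v2, he, h0, e⟩ |
    ⟨v1, v2, he, h0, e⟩ | ⟨u1, u2, he, h0, e⟩ | ⟨u1, u2, he, h0, e⟩ | ⟨_, e⟩
  · exact absurd h0 hm.2.2.1
  · exact absurd h0 (hm.2.2.2.1 v1 v2 he).1
  · exact absurd h0 (hm.2.2.2.1 v1 v2 he).2
  · exact absurd h0.symm (hm.2.2.2.2 u1 u2 he).1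
  · exact absurd h0.symm (hm.2.2.2.2 u1 u2 he).2
  · exact e

theorem rank_lt_left (t1 t2 : Term α) : t1.rank < (Term.mul t1 t2).rank := by
  simp [Term.rank]

theorem rank_lt_right (t1 t2 : Term α) : t2.rank < (Term.mul t1 t2).rank := by
  simp [Term.rank]

theorem smul_comm {u v : Term α} (hu : Reduced u) (hv : Reduced v) :
    TEquiv (smul u v) (smul v u) := by
  rcases smul_cases u v hu hv with ⟨h0, e⟩ | ⟨v1, v2, hv', h0, e⟩ |
    ⟨v1, v2, hv', h0, e⟩ | ⟨u1, u2, hu', h0, e⟩ | ⟨u1, u2, hu', h0, e⟩ | ⟨hr, e⟩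
  · -- A : u ∼ v
    rcases smul_cases v u hv hu with ⟨h0', e'⟩ | ⟨w1, w2, hw, h0', e'⟩ |
      ⟨w1, w2, hw, h0', e'⟩ | ⟨w1, w2, hw, h0', e'⟩ | ⟨w1, w2, hw, h0', e'⟩ | ⟨hr', e'⟩
    · rw [e, e']; exact h0
    · exfalso; have a := h0.rank_eq; have b := h0'.rank_eq; subst hw
      have := rank_lt_left w1 w2; omega
    · exfalso; have a := h0.rank_eq; have b := h0'.rank_eq; subst hw
      have := rank_lt_right w1 w2; omega
    · exfalso; have a := h0.rank_eq; have b := h0'.rank_eq; subst hw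
      have := rank_lt_left w1 w2; omega
    · exfalso; have a := h0.rank_eq; have b := h0'.rank_eq; subst hw
      have := rank_lt_right w1 w2; omega
    · exact absurd h0.symm ((reduced_mul_iff.mp hr').2.2.1)
  · -- B : v = mul v1 v2, u ∼ v1
    subst hv'
    rcases smul_cases (Term.mul v1 v2) u hv hu with ⟨h0', e'⟩ | ⟨w1, w2, hw, h0', e'⟩ |
      ⟨w1, w2, hw, h0', e'⟩ | ⟨w1, w2, hw, h0', e'⟩ | ⟨w1, w2, hw, h0', e'⟩ | ⟨hr', e'⟩
    · exfalso; have a := h0.rank_eq; have b := h0'.rank_eq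
      have := rank_lt_left v1 v2; omega
    · exfalso; subst hw; have a := h0.rank_eq; have b := h0'.rank_eq
      have := rank_lt_left v1 v2; have := rank_lt_left w1 w2; omega
    · exfalso; subst hw; have a := h0.rank_eq; have b := h0'.rank_eq
      have := rank_lt_left v1 v2; have := rank_lt_right w1 w2; omega
    · injection hw with e1 e2; subst e1; subst e2; rw [e, e']; exact .refl _
    · injection hw with e1 e2; subst e1; subst e2
      exact absurd (h0.symm.trans h0') (hv.1 v1 v2 (.refl _))
    · exact absurd h0.symm ((reduced_mul_iff.mp hr').2.2.2.2 v1 v2 rfl).1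
  · -- C : v = mul v1 v2, u ∼ v2
    subst hv'
    rcases smul_cases (Term.mul v1 v2) u hv hu with ⟨h0', e'⟩ | ⟨w1, w2, hw, h0', e'⟩ |
      ⟨w1, w2, hw, h0', e'⟩ | ⟨w1, w2, hw, h0', e'⟩ | ⟨w1, w2, hw, h0', e'⟩ | ⟨hr', e'⟩
    · exfalso; have a := h0.rank_eq; have b := h0'.rank_eq
      have := rank_lt_right v1 v2; omega
    · exfalso; subst hw; have a := h0.rank_eq; have b := h0'.rank_eq
      have := rank_lt_right v1 v2; have := rank_lt_left w1 w2; omega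
    · exfalso; subst hw; have a := h0.rank_eq; have b := h0'.rank_eq
      have := rank_lt_right v1 v2; have := rank_lt_right w1 w2; omega
    · injection hw with e1 e2; subst e1; subst e2
      exact absurd (h0'.symm.trans h0) (hv.1 v1 v2 (.refl _))
    · injection hw with e1 e2; subst e1; subst e2; rw [e, e']; exact .refl _
    · exact absurd h0.symm ((reduced_mul_iff.mp hr').2.2.2.2 v1 v2 rfl).2
  · -- D : u = mul u1 u2, v ∼ u1
    subst hu'
    rcases smul_cases v (Term.mul u1 u2) hv hu with ⟨h0', e'⟩ | ⟨w1, w2, hw, h0', e'⟩ |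
      ⟨w1, w2, hw, h0', e'⟩ | ⟨w1, w2, hw, h0', e'⟩ | ⟨w1, w2, hw, h0', e'⟩ | ⟨hr', e'⟩
    · exfalso; have a := h0.rank_eq; have b := h0'.rank_eq
      have := rank_lt_left u1 u2; omega
    · injection hw with e1 e2; subst e1; subst e2; rw [e, e']; exact .refl _
    · injection hw with e1 e2; subst e1; subst e2
      exact absurd (h0.symm.trans h0') (hu.1 u1 u2 (.refl _))
    · exfalso; subst hw; have a := h0.rank_eq; have b := h0'.rank_eq
      have := rank_lt_left u1 u2; have := rank_lt_left w1 w2; omega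
    · exfalso; subst hw; have a := h0.rank_eq; have b := h0'.rank_eq
      have := rank_lt_left u1 u2; have := rank_lt_right w1 w2; omega
    · exact absurd h0 ((reduced_mul_iff.mp hr').2.2.2.1 u1 u2 rfl).1
  · -- E : u = mul u1 u2, v ∼ u2
    subst hu'
    rcases smul_cases v (Term.mul u1 u2) hv hu with ⟨h0', e'⟩ | ⟨w1, w2, hw, h0', e'⟩ |
      ⟨w1, w2, hw, h0', e'⟩ | ⟨w1, w2, hw, h0', e'⟩ | ⟨w1, w2, hw, h0', e'⟩ | ⟨hr', e'⟩
    · exfalso; have a := h0.rank_eq; have b := h0'.rank_eq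
      have := rank_lt_right u1 u2; omega
    · injection hw with e1 e2; subst e1; subst e2
      exact absurd (h0'.symm.trans h0) (hu.1 u1 u2 (.refl _))
    · injection hw with e1 e2; subst e1; subst e2; rw [e, e']; exact .refl _
    · exfalso; subst hw; have a := h0.rank_eq; have b := h0'.rank_eq
      have := rank_lt_right u1 u2; have := rank_lt_left w1 w2; omega
    · exfalso; subst hw; have a := h0.rank_eq; have b := h0'.rank_eq
      have := rank_lt_right u1 u2; have := rank_lt_right w1 w2; omega
    · exact absurd h0 ((reduced_mul_iff.mp hr').2.2.2.1 u1 u2 rfl).2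
  · -- F
    rcases smul_cases v u hv hu with ⟨h0', e'⟩ | ⟨w1, w2, hw, h0', e'⟩ |
      ⟨w1, w2, hw, h0', e'⟩ | ⟨w1, w2, hw, h0', e'⟩ | ⟨w1, w2, hw, h0', e'⟩ | ⟨hr', e'⟩
    · exact absurd h0'.symm ((reduced_mul_iff.mp hr).2.2.1)
    · subst hw; exact absurd h0'.symm ((reduced_mul_iff.mp hr).2.2.2.2 w1 w2 rfl).1
    · subst hw; exact absurd h0'.symm ((reduced_mul_iff.mp hr).2.2.2.2 w1 w2 rfl).2
    · subst hw; exact absurd h0' ((reduced_mul_iff.mp hr).2.2.2.1 w1 w2 rfl).1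
    · subst hw; exact absurd h0' ((reduced_mul_iff.mp hr).2.2.2.1 w1 w2 rfl).2
    · rw [e, e']; exact .comm u v

theorem smul_lcancel {u v : Term α} (hu : Reduced u) (hv : Reduced v) :
    TEquiv (smul u (smul u v)) v := by
  rcases smul_cases u v hu hv with ⟨h0, e⟩ | ⟨v1, v2, hv', h0, e⟩ |
    ⟨v1, v2, hv', h0, e⟩ | ⟨u1, u2, hu', h0, e⟩ | ⟨u1, u2, hu', h0, e⟩ | ⟨hr, e⟩
  · rw [e, smul_self]; exact h0
  · -- B : v = mul v1 v2, u ∼ v1, smul u v = v2 ; goal smul u v2 ∼ mul v1 v2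
    subst hv'; rw [e]
    have hmp := reduced_mul_iff.mp hv
    rcases smul_cases u v2 hu hv.right with ⟨h0', e'⟩ | ⟨w1, w2, hw, h0', e'⟩ |
      ⟨w1, w2, hw, h0', e'⟩ | ⟨w1, w2, hw, h0', e'⟩ | ⟨w1, w2, hw, h0', e'⟩ | ⟨hr', e'⟩
    · exact absurd (h0.symm.trans h0') (hv.1 v1 v2 (.refl _))
    · exact absurd (h0.symm.trans h0') (hmp.2.2.2.1 w1 w2 hw).1
    · exact absurd (h0.symm.trans h0') (hmp.2.2.2.1 w1 w2 hw).2
    · -- u = mul w1 w2, v2 ∼ w1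
      exfalso; subst hw
      rcases h0.mul_decomp with ⟨s1, s2, hs, ⟨e1, e2⟩ | ⟨e1, e2⟩⟩ <;>
        · subst hs
          have h3 := reduced_mul_iff.mp hv
          obtain ⟨c1, c2⟩ := h3.2.2.2.2 s1 s2 rfl
          first
            | exact c1 (e1.symm.trans h0'.symm)
            | exact c2 (e1.symm.trans h0'.symm)
            | exact c1 (e2.symm.trans h0'.symm)
            | exact c2 (e2.symm.trans h0'.symm)
    · exfalso; subst hw
      rcases h0.mul_decomp with ⟨s1, s2, hs, ⟨e1, e2⟩ | ⟨e1, e2⟩⟩ <;>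
        · subst hs
          have h3 := reduced_mul_iff.mp hv
          obtain ⟨c1, c2⟩ := h3.2.2.2.2 s1 s2 rfl
          first
            | exact c1 (e1.symm.trans h0'.symm)
            | exact c2 (e1.symm.trans h0'.symm)
            | exact c1 (e2.symm.trans h0'.symm)
            | exact c2 (e2.symm.trans h0'.symm)
    · rw [e']; exact .congr h0 (.refl _)
  · -- C : v = mul v1 v2, u ∼ v2, smul u v = v1 ; goal smul u v1 ∼ mul v1 v2
    subst hv'; rw [e]
    have hmp := reduced_mul_iff.mp hv
    rcases smul_cases u v1 hu hv.left with ⟨h0', e'⟩ | ⟨w1, w2, hw, h0', e'⟩ |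
      ⟨w1, w2, hw, h0', e'⟩ | ⟨w1, w2, hw, h0', e'⟩ | ⟨w1, w2, hw, h0', e'⟩ | ⟨hr', e'⟩
    · exact absurd (h0'.symm.trans h0) (hv.1 v1 v2 (.refl _))
    · -- v1 = mul w1 w2, u ∼ w1 ; with u ∼ v2 : w1 ∼ v2 contra cond3
      exact absurd (h0'.symm.trans h0) (hmp.2.2.2.2 w1 w2 hw).1
    · exact absurd (h0'.symm.trans h0) (hmp.2.2.2.2 w1 w2 hw).2
    · -- u = mul w1 w2, v1 ∼ w1 ; u ∼ v2 : decompose v2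
      exfalso; subst hw
      rcases h0.mul_decomp with ⟨s1, s2, hs, ⟨e1, e2⟩ | ⟨e1, e2⟩⟩ <;>
        · subst hs
          obtain ⟨c1, c2⟩ := hmp.2.2.2.1 s1 s2 rfl
          first
            | exact c1 (h0'.trans e1)
            | exact c2 (h0'.trans e1)
            | exact c1 (h0'.trans e2)
            | exact c2 (h0'.trans e2)
    · exfalso; subst hw
      rcases h0.mul_decomp with ⟨s1, s2, hs, ⟨e1, e2⟩ | ⟨e1, e2⟩⟩ <;>
        · subst hs
          obtain ⟨c1, c2⟩ := hmp.2.2.2.1 s1 s2 rfl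
          first
            | exact c1 (h0'.trans e1)
            | exact c2 (h0'.trans e1)
            | exact c1 (h0'.trans e2)
            | exact c2 (h0'.trans e2)
    · rw [e']; exact (TEquiv.congr h0 (.refl v1)).trans (.comm v2 v1)
  · -- D : u = mul u1 u2, v ∼ u1, smul u v = u2 ; goal smul u u2 ∼ v
    subst hu'; rw [e]
    rcases smul_cases (Term.mul u1 u2) u2 hu hu.right with ⟨h0', e'⟩ | ⟨w1, w2, hw, h0', e'⟩ |
      ⟨w1, w2, hw, h0', e'⟩ | ⟨w1, w2, hw, h0', e'⟩ | ⟨w1, w2, hw, h0', e'⟩ | ⟨hr', e'⟩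
    · exfalso; have a := h0'.rank_eq; have := rank_lt_right u1 u2; omega
    · exfalso; subst hw; have a := h0'.rank_eq
      have := rank_lt_right u1 (Term.mul w1 w2); have := rank_lt_left w1 w2; omega
    · exfalso; subst hw; have a := h0'.rank_eq
      have := rank_lt_right u1 (Term.mul w1 w2); have := rank_lt_right w1 w2; omega
    · injection hw with e1 e2; subst e1; subst e2
      exact absurd h0'.symm (hu.1 u1 u2 (.refl _))
    · injection hw with e1 e2; subst e1; subst e2; rw [e']; exact h0.symm
    · exact absurd (TEquiv.refl u2) ((reduced_mul_iff.mp hr').2.2.2.2 u1 u2 rfl).2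
  · -- E : u = mul u1 u2, v ∼ u2, smul u v = u1 ; goal smul u u1 ∼ v
    subst hu'; rw [e]
    rcases smul_cases (Term.mul u1 u2) u1 hu hu.left with ⟨h0', e'⟩ | ⟨w1, w2, hw, h0', e'⟩ |
      ⟨w1, w2, hw, h0', e'⟩ | ⟨w1, w2, hw, h0', e'⟩ | ⟨w1, w2, hw, h0', e'⟩ | ⟨hr', e'⟩
    · exfalso; have a := h0'.rank_eq; have := rank_lt_left u1 u2; omega
    · exfalso; subst hw; have a := h0'.rank_eq
      have := rank_lt_left (Term.mul w1 w2) u2; have := rank_lt_left w1 w2; omega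
    · exfalso; subst hw; have a := h0'.rank_eq
      have := rank_lt_left (Term.mul w1 w2) u2; have := rank_lt_right w1 w2; omega
    · injection hw with e1 e2; subst e1; subst e2; rw [e']; exact h0.symm
    · injection hw with e1 e2; subst e1; subst e2
      exact absurd h0' (hu.1 u1 u2 (.refl _))
    · exact absurd (TEquiv.refl u1) ((reduced_mul_iff.mp hr').2.2.2.2 u1 u2 rfl).1
  · -- F : smul u v = mul u v ; goal smul u (mul u v) ∼ v
    rw [e]
    rcases smul_cases u (Term.mul u v) hu hr with ⟨h0', e'⟩ | ⟨w1, w2, hw, h0', e'⟩ |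
      ⟨w1, w2, hw, h0', e'⟩ | ⟨w1, w2, hw, h0', e'⟩ | ⟨w1, w2, hw, h0', e'⟩ | ⟨hr', e'⟩
    · exfalso; have a := h0'.rank_eq; have := rank_lt_left u v; omega
    · injection hw with e1 e2; subst e1; subst e2; rw [e']; exact .refl _
    · injection hw with e1 e2; subst e1; subst e2
      exact absurd h0' ((reduced_mul_iff.mp hr).2.2.1)
    · exfalso; subst hw; have a := h0'.rank_eq
      have := rank_lt_left (Term.mul w1 w2) v; have := rank_lt_left w1 w2; omega
    · exfalso; subst hw; have a := h0'.rank_eq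
      have := rank_lt_left (Term.mul w1 w2) v; have := rank_lt_right w1 w2; omega
    · exact absurd (TEquiv.refl u) ((reduced_mul_iff.mp hr').2.2.2.1 u v rfl).1

theorem smul_congr {u v u' v' : Term α} (hu : Reduced u) (hv : Reduced v)
    (hu' : Reduced u') (hv' : Reduced v') (h1 : TEquiv u u') (h2 : TEquiv v v') :
    TEquiv (smul u v) (smul u' v') := by
  rcases smul_cases u v hu hv with ⟨h0, e⟩ | ⟨v1, v2, hd, h0, e⟩ |
    ⟨v1, v2, hd, h0, e⟩ | ⟨u1, u2, hd, h0, e⟩ | ⟨u1, u2, hd, h0, e⟩ | ⟨hr, e⟩ <;>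
    rcases smul_cases u' v' hu' hv' with ⟨h0', e'⟩ | ⟨w1, w2, hw, h0', e'⟩ |
      ⟨w1, w2, hw, h0', e'⟩ | ⟨w1, w2, hw, h0', e'⟩ | ⟨w1, w2, hw, h0', e'⟩ | ⟨hr', e'⟩ <;>
    rw [e, e']
  -- outer A : u ∼ v
  · exact h1
  · exfalso; subst hw; have a := h0.rank_eq; have b := h0'.rank_eq
    have c := h1.rank_eq; have d := h2.rank_eq; have := rank_lt_left w1 w2; omega
  · exfalso; subst hw; have a := h0.rank_eq; have b := h0'.rank_eq
    have c := h1.rank_eq; have d := h2.rank_eq; have := rank_lt_right w1 w2; omega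
  · exfalso; subst hw; have a := h0.rank_eq; have b := h0'.rank_eq
    have c := h1.rank_eq; have d := h2.rank_eq; have := rank_lt_left w1 w2; omega
  · exfalso; subst hw; have a := h0.rank_eq; have b := h0'.rank_eq
    have c := h1.rank_eq; have d := h2.rank_eq; have := rank_lt_right w1 w2; omega
  · exact absurd (h1.symm.trans (h0.trans h2)) ((reduced_mul_iff.mp hr').2.2.1)
  -- outer B : v = mul v1 v2, u ∼ v1
  · exfalso; subst hd; have a := h0.rank_eq; have b := h0'.rank_eq
    have c := h1.rank_eq; have d := h2.rank_eq; have := rank_lt_left v1 v2; omega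
  · subst hd; subst hw
    rcases h2.mul_decomp with ⟨s1, s2, hs, ⟨e1, e2⟩ | ⟨e1, e2⟩⟩ <;>
      (injection hs with f1 f2; subst f1; subst f2)
    · exact e2
    · exact absurd ((((h0.symm.trans h1).trans h0').trans e2.symm)) (hv.1 v1 v2 (.refl _))
  · subst hd; subst hw
    rcases h2.mul_decomp with ⟨s1, s2, hs, ⟨e1, e2⟩ | ⟨e1, e2⟩⟩ <;>
      (injection hs with f1 f2; subst f1; subst f2)
    · exact absurd ((h0.symm.trans (h1.trans (h0'.trans e2.symm)))) (hv.1 v1 v2 (.refl _))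
    · exact e2
  · exfalso; subst hd; subst hw; have a := h0.rank_eq; have b := h0'.rank_eq
    have c := h1.rank_eq; have d := h2.rank_eq
    have := rank_lt_left v1 v2; have := rank_lt_left w1 w2; omega
  · exfalso; subst hd; subst hw; have a := h0.rank_eq; have b := h0'.rank_eq
    have c := h1.rank_eq; have d := h2.rank_eq
    have := rank_lt_left v1 v2; have := rank_lt_right w1 w2; omega
  · exfalso; subst hd
    rcases h2.mul_decomp with ⟨s1, s2, hs, ⟨e1, e2⟩ | ⟨e1, e2⟩⟩ <;>
      obtain ⟨c1, c2⟩ := (reduced_mul_iff.mp hr').2.2.2.1 s1 s2 hs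
    · exact c1 ((h1.symm.trans h0).trans e1)
    · exact c2 ((h1.symm.trans h0).trans e1)
  -- outer C : v = mul v1 v2, u ∼ v2
  · exfalso; subst hd; have a := h0.rank_eq; have b := h0'.rank_eq
    have c := h1.rank_eq; have d := h2.rank_eq; have := rank_lt_right v1 v2; omega
  · subst hd; subst hw
    rcases h2.mul_decomp with ⟨s1, s2, hs, ⟨e1, e2⟩ | ⟨e1, e2⟩⟩ <;>
      (injection hs with f1 f2; subst f1; subst f2)
    · exact absurd ((((h1.trans h0').trans e1.symm).symm).trans h0) (hv.1 v1 v2 (.refl _))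
    · exact e1
  · subst hd; subst hw
    rcases h2.mul_decomp with ⟨s1, s2, hs, ⟨e1, e2⟩ | ⟨e1, e2⟩⟩ <;>
      (injection hs with f1 f2; subst f1; subst f2)
    · exact e1
    · exact absurd ((((h1.trans h0').trans e1.symm).symm).trans h0) (hv.1 v1 v2 (.refl _))
  · exfalso; subst hd; subst hw; have a := h0.rank_eq; have b := h0'.rank_eq
    have c := h1.rank_eq; have d := h2.rank_eq
    have := rank_lt_right v1 v2; have := rank_lt_left w1 w2; omega
  · exfalso; subst hd; subst hw; have a := h0.rank_eq; have b := h0'.rank_eq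
    have c := h1.rank_eq; have d := h2.rank_eq
    have := rank_lt_right v1 v2; have := rank_lt_right w1 w2; omega
  · exfalso; subst hd
    rcases h2.mul_decomp with ⟨s1, s2, hs, ⟨e1, e2⟩ | ⟨e1, e2⟩⟩ <;>
      obtain ⟨c1, c2⟩ := (reduced_mul_iff.mp hr').2.2.2.1 s1 s2 hs
    · exact c2 ((h1.symm.trans h0).trans e2)
    · exact c1 ((h1.symm.trans h0).trans e2)
  -- outer D : u = mul u1 u2, v ∼ u1
  · exfalso; subst hd; have a := h0.rank_eq; have b := h0'.rank_eq
    have c := h1.rank_eq; have d := h2.rank_eq; have := rank_lt_left u1 u2; omega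
  · exfalso; subst hd; subst hw; have a := h0.rank_eq; have b := h0'.rank_eq
    have c := h1.rank_eq; have d := h2.rank_eq
    have := rank_lt_left u1 u2; have := rank_lt_left w1 w2; omega
  · exfalso; subst hd; subst hw; have a := h0.rank_eq; have b := h0'.rank_eq
    have c := h1.rank_eq; have d := h2.rank_eq
    have := rank_lt_left u1 u2; have := rank_lt_right w1 w2; omega
  · subst hd; subst hw
    rcases h1.mul_decomp with ⟨s1, s2, hs, ⟨e1, e2⟩ | ⟨e1, e2⟩⟩ <;>
      (injection hs with f1 f2; subst f1; subst f2)
    · exact e2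
    · exact absurd ((h0.symm.trans h2).trans (h0'.trans e2.symm)) (hu.1 u1 u2 (.refl _))
  · subst hd; subst hw
    rcases h1.mul_decomp with ⟨s1, s2, hs, ⟨e1, e2⟩ | ⟨e1, e2⟩⟩ <;>
      (injection hs with f1 f2; subst f1; subst f2)
    · exact absurd ((h0.symm.trans h2).trans (h0'.trans e2.symm)) (hu.1 u1 u2 (.refl _))
    · exact e2
  · exfalso; subst hd
    rcases h1.mul_decomp with ⟨s1, s2, hs, ⟨e1, e2⟩ | ⟨e1, e2⟩⟩ <;>
      obtain ⟨c1, c2⟩ := (reduced_mul_iff.mp hr').2.2.2.2 s1 s2 hs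
    · exact c1 (e1.symm.trans (h0.symm.trans h2))
    · exact c2 (e1.symm.trans (h0.symm.trans h2))
  -- outer E : u = mul u1 u2, v ∼ u2
  · exfalso; subst hd; have a := h0.rank_eq; have b := h0'.rank_eq
    have c := h1.rank_eq; have d := h2.rank_eq; have := rank_lt_right u1 u2; omega
  · exfalso; subst hd; subst hw; have a := h0.rank_eq; have b := h0'.rank_eq
    have c := h1.rank_eq; have d := h2.rank_eq
    have := rank_lt_right u1 u2; have := rank_lt_left w1 w2; omega
  · exfalso; subst hd; subst hw; have a := h0.rank_eq; have b := h0'.rank_eq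
    have c := h1.rank_eq; have d := h2.rank_eq
    have := rank_lt_right u1 u2; have := rank_lt_right w1 w2; omega
  · subst hd; subst hw
    rcases h1.mul_decomp with ⟨s1, s2, hs, ⟨e1, e2⟩ | ⟨e1, e2⟩⟩ <;>
      (injection hs with f1 f2; subst f1; subst f2)
    · exact absurd ((((h2.trans h0').trans e1.symm).symm).trans h0) (hu.1 u1 u2 (.refl _))
    · exact e1
  · subst hd; subst hw
    rcases h1.mul_decomp with ⟨s1, s2, hs, ⟨e1, e2⟩ | ⟨e1, e2⟩⟩ <;>
      (injection hs with f1 f2; subst f1; subst f2)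
    · exact e1
    · exact absurd ((((h2.trans h0').trans e1.symm).symm).trans h0) (hu.1 u1 u2 (.refl _))
  · exfalso; subst hd
    rcases h1.mul_decomp with ⟨s1, s2, hs, ⟨e1, e2⟩ | ⟨e1, e2⟩⟩ <;>
      obtain ⟨c1, c2⟩ := (reduced_mul_iff.mp hr').2.2.2.2 s1 s2 hs
    · exact c2 (e2.symm.trans (h0.symm.trans h2))
    · exact c1 (e2.symm.trans (h0.symm.trans h2))
  -- outer F
  · exact absurd (h1.trans (h0'.trans h2.symm)) ((reduced_mul_iff.mp hr).2.2.1)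
  · exfalso; subst hw
    rcases h2.symm.mul_decomp with ⟨s1, s2, hs, ⟨e1, e2⟩ | ⟨e1, e2⟩⟩ <;>
      obtain ⟨c1, c2⟩ := (reduced_mul_iff.mp hr).2.2.2.1 s1 s2 hs
    · exact c1 ((h1.trans h0').trans e1)
    · exact c2 ((h1.trans h0').trans e1)
  · exfalso; subst hw
    rcases h2.symm.mul_decomp with ⟨s1, s2, hs, ⟨e1, e2⟩ | ⟨e1, e2⟩⟩ <;>
      obtain ⟨c1, c2⟩ := (reduced_mul_iff.mp hr).2.2.2.1 s1 s2 hs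
    · exact c2 ((h1.trans h0').trans e2)
    · exact c1 ((h1.trans h0').trans e2)
  · exfalso; subst hw
    rcases h1.symm.mul_decomp with ⟨s1, s2, hs, ⟨e1, e2⟩ | ⟨e1, e2⟩⟩ <;>
      obtain ⟨c1, c2⟩ := (reduced_mul_iff.mp hr).2.2.2.2 s1 s2 hs
    · exact c1 (e1.symm.trans (h0'.symm.trans h2.symm))
    · exact c2 (e1.symm.trans (h0'.symm.trans h2.symm))
  · exfalso; subst hw
    rcases h1.symm.mul_decomp with ⟨s1, s2, hs, ⟨e1, e2⟩ | ⟨e1, e2⟩⟩ <;>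
      obtain ⟨c1, c2⟩ := (reduced_mul_iff.mp hr).2.2.2.2 s1 s2 hs
    · exact c2 (e2.symm.trans (h0'.symm.trans h2.symm))
    · exact c1 (e2.symm.trans (h0'.symm.trans h2.symm))
  · exact .congr h1 h2

/-! ### Generic closure lemmas -/

section generic
variable {M N : Type} [Steiner M] [Steiner N]

theorem closure_mono {X Y : Set M} (h : X ⊆ Y) : closure X ⊆ closure Y := by
  intro x hx
  induction hx with
  | base ha => exact mem_closure.base (h ha)
  | mul _ _ ih1 ih2 => exact mem_closure.mul ih1 ih2

theorem closure_le {X Y : Set M} (h : X ⊆ closure Y) : closure X ⊆ closure Y := by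
  intro x hx
  induction hx with
  | base ha => exact h ha
  | mul _ _ ih1 ih2 => exact mem_closure.mul ih1 ih2

theorem hom_image_closure (f : M →ₙ* N) {X : Set M} {x : M} (hx : x ∈ closure X) :
    f x ∈ closure (f '' X) := by
  induction hx with
  | base ha => exact mem_closure.base ⟨_, ha, rfl⟩
  | mul _ _ ih1 ih2 => rw [map_mul]; exact mem_closure.mul ih1 ih2

theorem hom_eqOn_closure {f g : M →ₙ* N} {X : Set M} (h : ∀ x ∈ X, f x = g x)
    {x : M} (hx : x ∈ closure X) : f x = g x := by
  induction hx with
  | base ha => exact h _ ha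
  | mul _ _ ih1 ih2 => rw [map_mul, map_mul, ih1, ih2]

end generic

/-! ### The free model on reduced terms -/

variable (α) in
def RTerm := {t : Term α // Reduced t}

instance rsetoid : Setoid (RTerm α) :=
  ⟨fun a b => TEquiv a.1 b.1,
   ⟨fun a => .refl _, fun h => h.symm, fun h1 h2 => h1.trans h2⟩⟩

variable (α) in
def FreeS := Quotient (rsetoid (α := α))

noncomputable instance : Steiner (FreeS α) where
  mul := Quotient.lift₂
    (fun a b => (⟦⟨smul a.1 b.1, smul_reduced a.2 b.2⟩⟧ : FreeS α))
    (fun a b a' b' h1 h2 => Quotient.sound (smul_congr a.2 b.2 a'.2 b'.2 h1 h2))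
  comm := by
    rintro ⟨x⟩ ⟨y⟩
    exact Quotient.sound (smul_comm x.2 y.2)
  idem := by
    rintro ⟨x⟩
    refine Quotient.sound ?_
    show TEquiv (smul x.1 x.1) x.1
    rw [smul_self]
    exact .refl _
  lcancel := by
    rintro ⟨x⟩ ⟨y⟩
    exact Quotient.sound (smul_lcancel x.2 y.2)

def FreeS.mk (x : RTerm α) : FreeS α := ⟦x⟧

theorem FreeS.mk_mul (x y : RTerm α) :
    FreeS.mk x * FreeS.mk y = FreeS.mk ⟨smul x.1 y.1, smul_reduced x.2 y.2⟩ := rfl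

theorem FreeS.sound {x y : RTerm α} (h : TEquiv x.1 y.1) : FreeS.mk x = FreeS.mk y :=
  Quotient.sound h

theorem FreeS.exact {x y : RTerm α} (h : FreeS.mk x = FreeS.mk y) : TEquiv x.1 y.1 :=
  Quotient.exact h

theorem FreeS.ind {motive : FreeS α → Prop} (h : ∀ x : RTerm α, motive (FreeS.mk x)) :
    ∀ q, motive q := Quotient.ind h

/-- The canonical variables in the free model. -/
def Vq (i : α) : FreeS α := FreeS.mk ⟨.var i, reduced_var i⟩

theorem Vq_injective : Function.Injective (Vq (α := α)) := by
  intro i j h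
  exact (FreeS.exact h).var_inj

/-- Evaluation homomorphism out of the free model. -/
noncomputable def evalHom {N : Type} [Steiner N] (e : α → N) : FreeS α →ₙ* N where
  toFun := Quotient.lift (fun t : RTerm α => t.1.eval e) (fun a b h => h.eval_eq e)
  map_mul' := by
    rintro ⟨x⟩ ⟨y⟩
    exact smul_eval e x.2 y.2

theorem evalHom_mk {N : Type} [Steiner N] (e : α → N) (x : RTerm α) :
    evalHom e (FreeS.mk x) = x.1.eval e := rfl

theorem evalHom_var {N : Type} [Steiner N] (e : α → N) (i : α) :
    evalHom e (Vq i) = e i := rfl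

theorem mk_mem_closure_range_Vq :
    ∀ (t : Term α) (h : Reduced t), FreeS.mk ⟨t, h⟩ ∈ closure (Set.range Vq)
  | .var i, h => mem_closure.base ⟨i, rfl⟩
  | .mul t s, h => by
    have h1 := mk_mem_closure_range_Vq t h.left
    have h2 := mk_mem_closure_range_Vq s h.right
    have : FreeS.mk ⟨.mul t s, h⟩ = FreeS.mk ⟨t, h.left⟩ * FreeS.mk ⟨s, h.right⟩ := by
      erw [FreeS.mk_mul]
      exact congrArg _ (Subtype.ext (smul_default h).symm)
    rw [this]
    exact mem_closure.mul h1 h2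

theorem closure_range_Vq : closure (Set.range (Vq (α := α))) = Set.univ := by
  refine Set.eq_univ_of_forall (FreeS.ind ?_)
  rintro ⟨t, h⟩
  exact mk_mem_closure_range_Vq t h

/-! ### The counting lemma -/

def Z3 (α : Type) : Type := α → ZMod 3

instance : Steiner (Z3 α) where
  mul x y := fun i => -(x i) - y i
  comm := by
    intro x y; funext i
    show -(x i) - y i = -(y i) - x i
    ring
  idem := by
    intro x; funext i
    show -(x i) - x i = x i
    have : ∀ a : ZMod 3, -a - a = a := by decide
    exact this _
  lcancel := by
    intro x y; funext i
    show -(x i) - (-(x i) - y i) = y i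
    ring

def toV (x : Z3 α) : α → ZMod 3 := x

theorem toV_mul (x y : Z3 α) : toV (x * y) = -toV x - toV y := by
  funext i; rfl

theorem closure_empty {M : Type} [Steiner M] : closure (∅ : Set M) = ∅ := by
  ext x
  simp only [Set.mem_empty_iff_false, iff_false]
  intro h
  induction h with
  | base h => exact h
  | mul _ _ ih1 ih2 => exact ih1

open Submodule in
theorem card_ge_of_generates [Fintype α] (D : Finset (FreeS α))
    (hD : closure (↑D : Set (FreeS α)) = Set.univ) : Fintype.card α ≤ D.card := by
  classical
  rcases Nat.eq_zero_or_pos (Fintype.card α) with h0 | h0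
  · omega
  have : Nonempty α := Fintype.card_pos_iff.mp h0
  obtain ⟨i₀⟩ := this
  rcases D.eq_empty_or_nonempty with rfl | ⟨d₀, hd₀⟩
  · exfalso
    rw [show ((∅ : Finset (FreeS α)) : Set (FreeS α)) = ∅ by simp, closure_empty] at hD
    exact absurd (hD ▸ Set.mem_univ (Vq i₀)) (Set.notMem_empty _)
  set e₀ : α → Z3 α := fun i => (fun j => if j = i then 1 else 0) with he₀
  set χ : FreeS α →ₙ* Z3 α := evalHom e₀ with hχ
  set S' : Finset (α → ZMod 3) := D.image (fun d => toV (χ d) - toV (χ d₀)) with hS'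
  have key : ∀ q : FreeS α, toV (χ q) - toV (χ d₀) ∈ span (ZMod 3) (↑S' : Set (α → ZMod 3)) := by
    intro q
    have hq : q ∈ closure (↑D : Set (FreeS α)) := hD ▸ Set.mem_univ q
    induction hq with
    | base h => exact subset_span (by exact Finset.mem_coe.mpr (Finset.mem_image_of_mem _ h))
    | @mul q1 q2 hq1 hq2 ih1 ih2 =>
      have e : toV (χ (q1 * q2)) - toV (χ d₀) =
          -(toV (χ q1) - toV (χ d₀)) - (toV (χ q2) - toV (χ d₀)) := by
        rw [map_mul, toV_mul]
        funext i
        have h3 : ∀ a b c : ZMod 3, -a - b - c = -(a - c) - (b - c) := by decide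
        exact h3 _ _ _
      rw [e, sub_eq_add_neg]
      exact Submodule.add_mem _ (Submodule.neg_mem _ ih1) (Submodule.neg_mem _ ih2)
  set u : {j : α // j ≠ i₀} → (α → ZMod 3) :=
    fun j => toV (e₀ j.1) - toV (e₀ i₀) with hu
  have hindep : LinearIndependent (ZMod 3) u := by
    apply LinearIndependent.of_comp
      (LinearMap.funLeft (ZMod 3) (ZMod 3) (Subtype.val : {j : α // j ≠ i₀} → α))
    have heq : (⇑(LinearMap.funLeft (ZMod 3) (ZMod 3)
        (Subtype.val : {j : α // j ≠ i₀} → α)) ∘ u) = fun j => (Pi.single j 1 : {j' : α // j' ≠ i₀} → ZMod 3) := by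
      funext j k
      show u j k.1 = (Pi.single j 1 : {j' : α // j' ≠ i₀} → ZMod 3) k
      rw [hu]
      show (if (k : α) = j.1 then (1 : ZMod 3) else 0) - (if (k : α) = i₀ then 1 else 0) = _
      rw [if_neg k.2, sub_zero]
      by_cases hkj : k = j
      · subst hkj
        rw [if_pos rfl, Pi.single_eq_same]
      · rw [if_neg (fun h => hkj (Subtype.ext h)), Pi.single_eq_of_ne hkj]
    rw [heq]
    have := (Pi.basisFun (ZMod 3) {j : α // j ≠ i₀}).linearIndependent
    convert this using 1
    funext j
    rw [Pi.basisFun_apply]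
  have hsub : span (ZMod 3) (Set.range u) ≤ span (ZMod 3) (↑S' : Set (α → ZMod 3)) := by
    rw [span_le]
    rintro _ ⟨j, rfl⟩
    have e : u j = (toV (χ (Vq j.1)) - toV (χ d₀)) - (toV (χ (Vq i₀)) - toV (χ d₀)) := by
      rw [hu]
      show toV (e₀ j.1) - toV (e₀ i₀) = _
      have e1 : χ (Vq j.1) = e₀ j.1 := rfl
      have e2 : χ (Vq i₀) = e₀ i₀ := rfl
      rw [e1, e2]
      try abel
    rw [e]
    exact Submodule.sub_mem _ (key _) (key _)
  have hfr1 : Module.finrank (ZMod 3) (span (ZMod 3) (Set.range u)) =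
      Fintype.card α - 1 := by
    rw [finrank_span_eq_card hindep, Fintype.card_subtype_compl]
    try simp [Fintype.card_subtype_eq]
  have h0S : (0 : α → ZMod 3) ∈ S' := by
    rw [hS']
    exact Finset.mem_image.mpr ⟨d₀, hd₀, by simp⟩
  have hspanerase : span (ZMod 3) (↑S' : Set (α → ZMod 3)) =
      span (ZMod 3) (↑(S'.erase 0) : Set (α → ZMod 3)) := by
    conv_lhs => rw [← Finset.insert_erase h0S]
    rw [Finset.coe_insert, span_insert_zero]
  have hfr2 : Module.finrank (ZMod 3) (span (ZMod 3) (↑S' : Set (α → ZMod 3))) ≤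
      S'.card - 1 := by
    rw [hspanerase]
    calc Module.finrank (ZMod 3) (span (ZMod 3) (↑(S'.erase 0) : Set (α → ZMod 3)))
        ≤ (S'.erase 0).card := finrank_span_finset_le_card _
      _ = S'.card - 1 := Finset.card_erase_of_mem h0S
  have hmono := Submodule.finrank_mono (M := α → ZMod 3) (R := ZMod 3) hsub
  have hScard : S'.card ≤ D.card := Finset.card_image_le
  have hD1 : 1 ≤ D.card := Finset.card_pos.mpr ⟨d₀, hd₀⟩
  have hS1 : 1 ≤ S'.card := Finset.card_pos.mpr ⟨0, h0S⟩
  omega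

/-! ### Built elements and the safety condition -/

noncomputable def qsize : FreeS α → ℕ :=
  Quotient.lift (fun t : RTerm α => t.1.size) (fun _ _ h => h.size_eq)

theorem qsize_mk (x : RTerm α) : qsize (FreeS.mk x) = x.1.size := rfl

inductive BuiltT (X : Set (FreeS α)) : Term α → Prop
  | base (t : Term α) (ht : Reduced t) : FreeS.mk ⟨t, ht⟩ ∈ X → BuiltT X t
  | node (t s : Term α) : BuiltT X t → BuiltT X s → Reduced (.mul t s) →
      BuiltT X (.mul t s)

theorem BuiltT.reduced {X : Set (FreeS α)} {t : Term α} (h : BuiltT X t) :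
    Reduced t := by
  induction h with
  | base t ht _ => exact ht
  | node t s _ _ hr _ _ => exact hr

theorem BuiltT.tequiv {X : Set (FreeS α)} :
    ∀ {t : Term α}, BuiltT X t → ∀ {s : Term α}, TEquiv t s → BuiltT X s := by
  intro t h
  induction h with
  | base t ht hmem =>
    intro s hts
    refine .base s (ht.tequiv hts) ?_
    rw [show FreeS.mk ⟨s, ht.tequiv hts⟩ = FreeS.mk ⟨t, ht⟩ from FreeS.sound hts.symm]
    exact hmem
  | node t1 t2 h1 h2 hred ih1 ih2 =>
    intro s hts
    rcases hts.mul_decomp with ⟨s1, s2, rfl, ⟨e1, e2⟩ | ⟨e1, e2⟩⟩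
    · exact .node s1 s2 (ih1 e1) (ih2 e2) (hred.tequiv hts)
    · exact .node s1 s2 (ih2 e2) (ih1 e1) (hred.tequiv hts)

theorem BuiltT.avoid {X : Set (FreeS α)} {b : FreeS α} :
    ∀ {t : Term α}, BuiltT X t → t.size < qsize b → BuiltT (X \ {b}) t := by
  intro t h
  induction h with
  | base t ht hmem =>
    intro hs
    refine .base t ht ⟨hmem, ?_⟩
    intro e
    rw [Set.mem_singleton_iff] at e
    erw [← e, qsize_mk] at hs
    exact lt_irrefl _ hs
  | node t s h1 h2 hr ih1 ih2 =>
    intro hs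
    have p1 := Term.size_pos t
    have p2 := Term.size_pos s
    have hs' : t.size + s.size < qsize b := hs
    exact .node t s (ih1 (by omega)) (ih2 (by omega)) hr

theorem BuiltT.to_closure {X : Set (FreeS α)} :
    ∀ {t : Term α}, BuiltT X t → ∀ (hr : Reduced t), FreeS.mk ⟨t, hr⟩ ∈ closure X := by
  intro t h
  induction h with
  | base t ht hmem => intro hr; exact mem_closure.base hmem
  | node t s h1 h2 hred ih1 ih2 =>
    intro hr
    have e : FreeS.mk ⟨.mul t s, hr⟩ = FreeS.mk ⟨t, hr.left⟩ * FreeS.mk ⟨s, hr.right⟩ := by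
      erw [FreeS.mk_mul]
      exact congrArg _ (Subtype.ext (smul_default hr).symm)
    rw [e]
    exact mem_closure.mul (ih1 _) (ih2 _)

/-- The Nielsen safety condition. -/
def Nsafe (X : Set (FreeS α)) : Prop :=
  ∀ (t1 t2 : Term α) (h : Reduced (.mul t1 t2)),
    FreeS.mk ⟨.mul t1 t2, h⟩ ∈ X → ¬ BuiltT X t1 ∧ ¬ BuiltT X t2

theorem closure_sub_built {X : Set (FreeS α)} (hsafe : Nsafe X) :
    ∀ {q : FreeS α}, q ∈ closure X → ∃ x : RTerm α, FreeS.mk x = q ∧ BuiltT X x.1 := by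
  intro q hq
  induction hq with
  | base h =>
    rename_i a
    obtain ⟨x, rfl⟩ := a.exists_rep
    exact ⟨x, rfl, .base x.1 x.2 h⟩
  | mul hq1 hq2 ih1 ih2 =>
    obtain ⟨u, rfl, hu⟩ := ih1
    obtain ⟨v, rfl, hv⟩ := ih2
    refine ⟨⟨smul u.1 v.1, smul_reduced u.2 v.2⟩, (FreeS.mk_mul u v).symm, ?_⟩
    rcases smul_cases u.1 v.1 u.2 v.2 with ⟨h0, e⟩ | ⟨v1, v2, hd, h0, e⟩ |
      ⟨v1, v2, hd, h0, e⟩ | ⟨u1, u2, hd, h0, e⟩ | ⟨u1, u2, hd, h0, e⟩ | ⟨hr, e⟩ <;>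
      rw [show (⟨smul u.1 v.1, smul_reduced u.2 v.2⟩ : RTerm α).1 = smul u.1 v.1 from rfl, e]
    · exact hu
    · have hv' : BuiltT X (.mul v1 v2) := hd ▸ hv
      cases hv' with
      | base _ ht hmem => exact absurd (hu.tequiv h0) (hsafe v1 v2 ht hmem).1
      | node _ _ hb1 hb2 _ => exact hb2
    · have hv' : BuiltT X (.mul v1 v2) := hd ▸ hv
      cases hv' with
      | base _ ht hmem => exact absurd (hu.tequiv h0) (hsafe v1 v2 ht hmem).2
      | node _ _ hb1 hb2 _ => exact hb1
    · have hu' : BuiltT X (.mul u1 u2) := hd ▸ hu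
      cases hu' with
      | base _ ht hmem => exact absurd (hv.tequiv h0) (hsafe u1 u2 ht hmem).1
      | node _ _ hb1 hb2 _ => exact hb2
    · have hu' : BuiltT X (.mul u1 u2) := hd ▸ hu
      cases hu' with
      | base _ ht hmem => exact absurd (hv.tequiv h0) (hsafe u1 u2 ht hmem).2
      | node _ _ hb1 hb2 _ => exact hb1
    · exact .node _ _ hu hv hr

/-! ### The main extension theorem -/

theorem free_ext [Fintype α] (w : ℕ) :
    ∀ (B : Finset (FreeS α)), closure (↑B : Set (FreeS α)) = Set.univ →
      B.card = Fintype.card α → (∑ b ∈ B, qsize b) = w →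
      ∀ (N : Type) [Steiner N] (g : FreeS α → N),
        ∃ h : FreeS α →ₙ* N, ∀ b ∈ B, h b = g b := by
  induction w using Nat.strong_induction_on with
  | _ w IH =>
  intro B hBgen hBcard hBw N instN g
  classical
  by_cases hN : Nsafe (↑B : Set (FreeS α))
  · -- safe case : B is the set of variables
    have hvar : ∀ i : α, Vq i ∈ B := by
      intro i
      have hq : Vq i ∈ closure (↑B : Set (FreeS α)) := by rw [hBgen]; trivial
      obtain ⟨x, hxq, hxb⟩ := closure_sub_built hN hq
      have hx : x.1 = .var i := (FreeS.exact hxq).symm.var_eq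
      rw [hx] at hxb
      cases hxb with
      | base _ ht hmem => exact hmem
    have hsubset : Finset.univ.image (fun i : α => Vq i) ⊆ B := by
      intro b hb
      obtain ⟨i, _, rfl⟩ := Finset.mem_image.mp hb
      exact hvar i
    have hcardim : (Finset.univ.image (fun i : α => Vq i)).card = Fintype.card α := by
      rw [Finset.card_image_of_injective _ Vq_injective, Finset.card_univ]
    have hBeq : Finset.univ.image (fun i : α => Vq i) = B :=
      Finset.eq_of_subset_of_card_le hsubset (by omega)
    refine ⟨evalHom (fun i => g (Vq i)), ?_⟩
    intro b hb
    rw [← hBeq] at hb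
    obtain ⟨i, _, rfl⟩ := Finset.mem_image.mp hb
    exact evalHom_var _ i
  · unfold Nsafe at hN
    push_neg at hN
    obtain ⟨t1, t2, h12, hmem0, hside⟩ := hN
    have main : ∀ (s1 s2 : Term α) (hs : Reduced (.mul s1 s2)),
        FreeS.mk ⟨.mul s1 s2, hs⟩ ∈ (↑B : Set (FreeS α)) →
        BuiltT (↑B : Set (FreeS α)) s1 →
        ∃ h : FreeS α →ₙ* N, ∀ b ∈ B, h b = g b := by
      intro s1 s2 hs hmemS hb1
      have hmem : FreeS.mk ⟨.mul s1 s2, hs⟩ ∈ B := Finset.mem_coe.mp hmemS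
      set b : FreeS α := FreeS.mk ⟨.mul s1 s2, hs⟩ with hbdef
      set b2 : FreeS α := FreeS.mk ⟨s2, hs.right⟩ with hb2def
      have p1 := Term.size_pos s1
      have p2 := Term.size_pos s2
      have hqb : qsize b = s1.size + s2.size := rfl
      have hqb2 : qsize b2 = s2.size := rfl
      have hb1' : BuiltT ((↑B : Set (FreeS α)) \ {b}) s1 := hb1.avoid (by omega)
      have hbmul : b = FreeS.mk ⟨s1, hs.left⟩ * FreeS.mk ⟨s2, hs.right⟩ := by
        erw [FreeS.mk_mul]
        exact congrArg _ (Subtype.ext (smul_default hs).symm)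
      have hcoe : ((B.erase b : Finset (FreeS α)) : Set (FreeS α)) =
          (↑B : Set (FreeS α)) \ {b} := Finset.coe_erase _ _
      have hT1 : FreeS.mk ⟨s1, hs.left⟩ ∈
          closure ((B.erase b : Finset (FreeS α)) : Set (FreeS α)) := by
        rw [hcoe]
        exact hb1'.to_closure hs.left
      set B' : Finset (FreeS α) := insert b2 (B.erase b) with hB'def
      have hsubB' : ((B.erase b : Finset (FreeS α)) : Set (FreeS α)) ⊆
          (↑B' : Set (FreeS α)) := Finset.coe_subset.mpr (Finset.subset_insert _ _)
      have hgen' : closure (↑B' : Set (FreeS α)) = Set.univ := by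
        apply Set.eq_univ_of_univ_subset
        rw [← hBgen]
        apply closure_le
        intro x hx
        by_cases hxb : x = b
        · subst hxb
          rw [hbmul]
          refine mem_closure.mul (closure_mono hsubB' hT1) (mem_closure.base ?_)
          exact Finset.mem_coe.mpr (Finset.mem_insert_self _ _)
        · refine mem_closure.base (hsubB' ?_)
          rw [hcoe]
          exact ⟨hx, hxb⟩
      have hbne : 1 ≤ B.card := Finset.card_pos.mpr ⟨b, hmem⟩
      have hb2notin : b2 ∉ B.erase b := by
        intro hmem2
        have heq : B' = B.erase b := Finset.insert_eq_self.mpr hmem2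
        have hcard := card_ge_of_generates (B.erase b) (by rw [← heq]; exact hgen')
        rw [Finset.card_erase_of_mem hmem] at hcard
        omega
      have hcard' : B'.card = Fintype.card α := by
        rw [hB'def, Finset.card_insert_of_notMem hb2notin,
          Finset.card_erase_of_mem hmem]
        omega
      have hsum : (∑ x ∈ B', qsize x) < w := by
        rw [hB'def, Finset.sum_insert hb2notin]
        have hse := Finset.sum_erase_add B qsize hmem
        omega
      obtain ⟨h₀, hh₀⟩ := IH _ hsum B' hgen' hcard' rfl N g
      obtain ⟨h₁, hh₁⟩ := IH _ hsum B' hgen' hcard' rfl N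
        (Function.update g b2 (h₀ (FreeS.mk ⟨s1, hs.left⟩) * g b))
      have hagree : ∀ x ∈ ((B.erase b : Finset (FreeS α)) : Set (FreeS α)),
          h₁ x = h₀ x := by
        intro x hx
        have hxe : x ∈ B.erase b := Finset.mem_coe.mp hx
        have hxB' : x ∈ B' := Finset.mem_insert_of_mem hxe
        rw [hh₁ x hxB', hh₀ x hxB',
          Function.update_of_ne (fun e => hb2notin (by rw [← e]; exact hxe)) _ _]
      have hT1' : h₁ (FreeS.mk ⟨s1, hs.left⟩) = h₀ (FreeS.mk ⟨s1, hs.left⟩) :=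
        hom_eqOn_closure hagree hT1
      refine ⟨h₁, ?_⟩
      intro x hx
      by_cases hxb : x = b
      · subst hxb
        have hb2B' : b2 ∈ B' := Finset.mem_insert_self _ _
        conv_lhs => rw [hbmul]
        rw [map_mul, hT1', hh₁ b2 hb2B', Function.update_self]
        exact Steiner.lcancel _ _
      · have hxe : x ∈ B.erase b := Finset.mem_erase.mpr ⟨hxb, hx⟩
        have hxB' : x ∈ B' := Finset.mem_insert_of_mem hxe
        rw [hh₁ x hxB', Function.update_of_ne (fun e => hb2notin (by rw [← e]; exact hxe)) _ _]
    by_cases hb1 : BuiltT (↑B : Set (FreeS α)) t1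
    · exact main t1 t2 h12 hmem0 hb1
    · have h2 := hside hb1
      have h21 : Reduced (.mul t2 t1) := Reduced.tequiv (TEquiv.comm t1 t2) h12
      apply main t2 t1 h21 ?_ h2
      rw [show FreeS.mk ⟨.mul t2 t1, h21⟩ = FreeS.mk ⟨.mul t1 t2, h12⟩ from
        FreeS.sound (TEquiv.comm t2 t1)]
      exact hmem0

/-! ### Hopficity of the free model -/

theorem freeS_hopf [Fintype α] (σ : FreeS α →ₙ* FreeS α)
    (hσ : Function.Surjective σ) : Function.Injective σ := by
  classical
  set B : Finset (FreeS α) := Finset.univ.image (fun i => σ (Vq i)) with hB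
  have hBgen : closure (↑B : Set (FreeS α)) = Set.univ := by
    apply Set.eq_univ_of_forall
    intro q
    obtain ⟨p, rfl⟩ := hσ q
    have hp : p ∈ closure (Set.range Vq) := by rw [closure_range_Vq]; trivial
    refine closure_mono ?_ (hom_image_closure σ hp)
    rintro _ ⟨_, ⟨i, rfl⟩, rfl⟩
    exact Finset.mem_coe.mpr (Finset.mem_image_of_mem _ (Finset.mem_univ i))
  have hcard_le : B.card ≤ Fintype.card α :=
    (Finset.card_image_le).trans (by rw [Finset.card_univ])
  have hcard_ge := card_ge_of_generates B hBgen
  have hBcard : B.card = Fintype.card α := le_antisymm hcard_le hcard_ge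
  have hinjOn : Set.InjOn (fun i => σ (Vq i)) ↑(Finset.univ : Finset α) := by
    rw [← Finset.card_image_iff]
    rw [← hB, hBcard, Finset.card_univ]
  have hinj : Function.Injective (fun i : α => σ (Vq i)) := by
    intro i j h
    exact hinjOn (Finset.mem_coe.mpr (Finset.mem_univ i))
      (Finset.mem_coe.mpr (Finset.mem_univ j)) h
  set g : FreeS α → FreeS α :=
    fun q => if h : ∃ i, σ (Vq i) = q then Vq h.choose else q with hg
  obtain ⟨h, hh⟩ := free_ext (∑ b ∈ B, qsize b) B hBgen hBcard rfl (FreeS α) g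
  have hkey : ∀ i, h (σ (Vq i)) = Vq i := by
    intro i
    have hmem : σ (Vq i) ∈ B := Finset.mem_image_of_mem _ (Finset.mem_univ i)
    rw [hh _ hmem]
    have hex : ∃ j, σ (Vq j) = σ (Vq i) := ⟨i, rfl⟩
    simp only [hg]
    rw [dif_pos hex]
    exact congrArg Vq (hinj hex.choose_spec)
  have hid : ∀ q, h (σ q) = q := by
    intro q
    have h1 : (h.comp σ) q = (MulHom.id _) q :=
      hom_eqOn_closure (f := h.comp σ) (g := MulHom.id _) (X := Set.range Vq)
        (by rintro _ ⟨i, rfl⟩; exact hkey i) (by rw [closure_range_Vq]; trivial)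
    exact h1
  intro a b hab
  rw [← hid a, ← hid b, hab]

end Steiner

open Steiner
/-- Every surjective endomorphism of a finitely generated free Steiner
quasigroup is an automorphism. -/
theorem stmt5 {M : Type} [Steiner M] (A : Set M) (hA : FreeBase A)
    (hfin : A.Finite) (f : M →ₙ* M) (hf : Function.Surjective f) :
    Function.Bijective f := by
  classical
  haveI : Fintype ↑A := hfin.fintype
  obtain ⟨φ, hφ⟩ := hA.2 (FreeS ↑A) (fun a => Vq a)
  set ψ : FreeS ↑A →ₙ* M := evalHom (fun a => (a : M)) with hψ
  have hψφ : ∀ x : M, ψ (φ x) = x := by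
    intro x
    refine hom_eqOn_closure (f := ψ.comp φ) (g := MulHom.id M) (X := A) ?_
      (by rw [hA.1]; trivial)
    intro a ha
    show ψ (φ a) = a
    rw [show φ a = Vq (⟨a, ha⟩ : ↑A) from hφ ⟨a, ha⟩]
    rfl
  have hφψ : ∀ q : FreeS ↑A, φ (ψ q) = q := by
    intro q
    refine hom_eqOn_closure (f := φ.comp ψ) (g := MulHom.id _) (X := Set.range Vq) ?_
      (by rw [closure_range_Vq]; trivial)
    rintro _ ⟨a, rfl⟩
    show φ (ψ (Vq a)) = Vq a
    rw [show ψ (Vq a) = (a : M) from rfl]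
    exact hφ a
  set σ : FreeS ↑A →ₙ* FreeS ↑A := (φ.comp f).comp ψ with hσ
  have hσsurj : Function.Surjective σ := by
    intro q
    obtain ⟨m, hm⟩ := hf (ψ q)
    refine ⟨φ m, ?_⟩
    show φ (f (ψ (φ m))) = q
    rw [hψφ, hm]
    exact hφψ q
  have hσinj := freeS_hopf σ hσsurj
  constructor
  · intro a b hab
    have h1 : σ (φ a) = σ (φ b) := by
      show φ (f (ψ (φ a))) = φ (f (ψ (φ b)))
      rw [hψφ, hψφ, hab]
    have h2 := congrArg ψ (hσinj h1)
    rwa [hψφ, hψφ] at h2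
  · exact hf
end

section
/- A subset A of a Steiner quasigroup M is a free base of M if and only if there exists a well-order of M that is a hyperfree ordering (every element lies in at most one block consisting of it and two smaller elements) such that A is exactly the set of elements that are not a product of two smaller elements. -/
open Steiner
namespace SP
open Steiner

variable {α : Type} {M : Type} [Steiner M]

/-- Unordered factor matching. -/
def FacEq : Term α → Term α → Prop
  | .var a, .var b => a = b
  | .mul t1 t2, .mul s1 s2 =>
      (TEquiv t1 s1 ∧ TEquiv t2 s2) ∨ (TEquiv t1 s2 ∧ TEquiv t2 s1)
  | _, _ => False

lemma facEq_refl : ∀ t : Term α, FacEq t t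
  | .var _ => rfl
  | .mul t s => Or.inl ⟨.refl t, .refl s⟩

lemma facEq_symm : ∀ {t s : Term α}, FacEq t s → FacEq s t
  | .var _, .var _, h => h.symm
  | .mul _ _, .mul _ _, Or.inl ⟨h1,h2⟩ => Or.inl ⟨h1.symm, h2.symm⟩
  | .mul _ _, .mul _ _, Or.inr ⟨h1,h2⟩ => Or.inr ⟨h2.symm, h1.symm⟩

lemma facEq_trans : ∀ {t s u : Term α}, FacEq t s → FacEq s u → FacEq t u
  | .var _, .var _, .var _, h1, h2 => h1.trans h2
  | .mul _ _, .mul _ _, .mul _ _, Or.inl ⟨a1,a2⟩, Or.inl ⟨b1,b2⟩ =>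
      Or.inl ⟨a1.trans b1, a2.trans b2⟩
  | .mul _ _, .mul _ _, .mul _ _, Or.inl ⟨a1,a2⟩, Or.inr ⟨b1,b2⟩ =>
      Or.inr ⟨a1.trans b1, a2.trans b2⟩
  | .mul _ _, .mul _ _, .mul _ _, Or.inr ⟨a1,a2⟩, Or.inl ⟨b1,b2⟩ =>
      Or.inr ⟨a1.trans b2, a2.trans b1⟩
  | .mul _ _, .mul _ _, .mul _ _, Or.inr ⟨a1,a2⟩, Or.inr ⟨b1,b2⟩ =>
      Or.inl ⟨a1.trans b2, a2.trans b1⟩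

lemma tequiv_facEq {t s : Term α} (h : TEquiv t s) : FacEq t s := by
  induction h with
  | refl t => exact facEq_refl t
  | symm _ ih => exact facEq_symm ih
  | trans _ _ ih1 ih2 => exact facEq_trans ih1 ih2
  | comm t s => exact Or.inr ⟨.refl t, .refl s⟩
  | @congr t t' s s' h1 h2 _ _ => exact Or.inl ⟨h1, h2⟩

lemma not_tequiv_var_mul {a : α} {s1 s2 : Term α} : ¬ TEquiv (.var a) (.mul s1 s2) :=
  fun h => tequiv_facEq h

lemma tequiv_var {a : α} {s : Term α} (h : TEquiv (Term.var a) s) : s = .var a := by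
  cases s with
  | var b => have := tequiv_facEq h; exact congrArg Term.var (this : a = b).symm ▸ rfl
  | mul s1 s2 => exact absurd h not_tequiv_var_mul

lemma tequiv_mul {t1 t2 s1 s2 : Term α} (h : TEquiv (.mul t1 t2) (.mul s1 s2)) :
    (TEquiv t1 s1 ∧ TEquiv t2 s2) ∨ (TEquiv t1 s2 ∧ TEquiv t2 s1) :=
  tequiv_facEq h

lemma tequiv_rank {t s : Term α} (h : TEquiv t s) : t.rank = s.rank := by
  induction h with
  | refl t => rfl
  | symm _ ih => exact ih.symm
  | trans _ _ ih1 ih2 => exact ih1.trans ih2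
  | comm t s => simp [Term.rank, Nat.max_comm]
  | congr _ _ ih1 ih2 => simp [Term.rank, ih1, ih2]

lemma tequiv_eval (e : α → M) {t s : Term α} (h : TEquiv t s) : t.eval e = s.eval e := by
  induction h with
  | refl t => rfl
  | symm _ ih => exact ih.symm
  | trans _ _ ih1 ih2 => exact ih1.trans ih2
  | comm t s => exact Steiner.comm _ _
  | congr _ _ ih1 ih2 => simp [Term.eval, ih1, ih2]

/-- Reduced terms. -/
def Red : Term α → Prop
  | .var _ => True
  | .mul t s => Red t ∧ Red s ∧ ¬ TEquiv t s ∧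
      (∀ a b : Term α, TEquiv s (.mul a b) → ¬ TEquiv t a ∧ ¬ TEquiv t b) ∧
      (∀ a b : Term α, TEquiv t (.mul a b) → ¬ TEquiv a s ∧ ¬ TEquiv b s)

lemma red_tequiv : ∀ (t s : Term α), TEquiv t s → Red t → Red s
  | .var _, s, h, _ => by rw [tequiv_var h]; trivial
  | .mul _ _, .var _, h, _ => absurd (tequiv_facEq h) (fun h => h)
  | .mul t1 t2, .mul s1 s2, h, ht => by
    obtain ⟨r1, r2, r3, r4, r5⟩ := ht
    rcases tequiv_mul h with ⟨h1, h2⟩ | ⟨h1, h2⟩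
    · refine ⟨red_tequiv _ _ h1 r1, red_tequiv _ _ h2 r2,
        fun hc => r3 (h1.trans (hc.trans h2.symm)), fun a b hab => ?_, fun a b hab => ?_⟩
      · have := r4 a b (h2.trans hab)
        exact ⟨fun hc => this.1 (h1.trans hc), fun hc => this.2 (h1.trans hc)⟩
      · have := r5 a b (h1.trans hab)
        exact ⟨fun hc => this.1 (hc.trans h2.symm), fun hc => this.2 (hc.trans h2.symm)⟩
    · refine ⟨red_tequiv _ _ h2 r2, red_tequiv _ _ h1 r1,
        fun hc => r3 (h1.trans (hc.symm.trans h2.symm)), fun a b hab => ?_, fun a b hab => ?_⟩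
      · have := r5 a b (h1.trans hab)
        exact ⟨fun hc => this.1 (hc.symm.trans h2.symm), fun hc => this.2 (hc.symm.trans h2.symm)⟩
      · have := r4 a b (h2.trans hab)
        exact ⟨fun hc => this.1 (h1.trans hc.symm), fun hc => this.2 (h1.trans hc.symm)⟩

end SP
namespace SP
open Steiner

variable {α : Type} {M : Type} [Steiner M]

lemma red_of_decomp {s t u : Term α} (hs : Red s) (h : TEquiv s (.mul t u)) :
    Red t ∧ Red u := by
  cases s with
  | var a => exact absurd h not_tequiv_var_mul
  | mul s1 s2 =>
    rcases tequiv_mul h with ⟨h1, h2⟩ | ⟨h1, h2⟩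
    · exact ⟨red_tequiv _ _ h1 hs.1, red_tequiv _ _ h2 hs.2.1⟩
    · exact ⟨red_tequiv _ _ h2 hs.2.1, red_tequiv _ _ h1 hs.1⟩

lemma not_self_decomp {s t u : Term α} (hs : Red s) (h : TEquiv s (.mul t u)) :
    ¬ TEquiv t u := by
  cases s with
  | var a => exact absurd h not_tequiv_var_mul
  | mul s1 s2 =>
    intro htu
    rcases tequiv_mul h with ⟨h1, h2⟩ | ⟨h1, h2⟩
    · exact hs.2.2.1 (h1.trans (htu.trans h2.symm))
    · exact hs.2.2.1 (h1.trans (htu.symm.trans h2.symm))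

lemma cancel_wit {s t u u' : Term α} (hs : Red s) (h : TEquiv s (.mul t u))
    (h' : TEquiv s (.mul t u')) : TEquiv u u' := by
  rcases tequiv_mul (h.symm.trans h') with ⟨_, h2⟩ | ⟨h1, h2⟩
  · exact h2
  · exact absurd h2.symm (not_self_decomp hs h)

lemma not_nested_right {s t u v : Term α} (hs : Red s) (h : TEquiv s (.mul t u))
    (h2 : TEquiv u (.mul t v)) : False := by
  cases s with
  | var a => exact absurd h not_tequiv_var_mul
  | mul s1 s2 =>
    rcases tequiv_mul h with ⟨a1, a2⟩ | ⟨a1, a2⟩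
    · exact (hs.2.2.2.1 t v (a2.trans h2)).1 a1
    · exact (hs.2.2.2.2 t v (a1.trans h2)).1 a2.symm

lemma not_nested_left {s t u v : Term α} (hs : Red s) (h : TEquiv s (.mul t u))
    (h2 : TEquiv t (.mul u v)) : False := by
  cases s with
  | var a => exact absurd h not_tequiv_var_mul
  | mul s1 s2 =>
    rcases tequiv_mul h with ⟨a1, a2⟩ | ⟨a1, a2⟩
    · exact (hs.2.2.2.2 u v (a1.trans h2)).1 a2.symm
    · exact (hs.2.2.2.1 u v (a2.trans h2)).1 a1

open Classical in
/-- Multiplication of reduced terms. -/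
noncomputable def rmul (t s : Term α) : Term α :=
  if TEquiv t s then t
  else if h : ∃ u, TEquiv s (.mul t u) then h.choose
  else if h : ∃ u, TEquiv t (.mul s u) then h.choose
  else .mul t s

lemma red_rmul {t s : Term α} (ht : Red t) (hs : Red s) : Red (rmul t s) := by
  rw [rmul]
  split_ifs with c1 c2 c3
  · exact ht
  · exact (red_of_decomp hs c2.choose_spec).2
  · exact (red_of_decomp ht c3.choose_spec).2
  · refine ⟨ht, hs, c1, fun a b hab => ?_, fun a b hab => ?_⟩
    · constructor
      · intro hc; exact c2 ⟨b, hab.trans (TEquiv.congr hc.symm (.refl b))⟩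
      · intro hc
        exact c2 ⟨a, hab.trans ((TEquiv.comm a b).trans (TEquiv.congr hc.symm (.refl a)))⟩
    · constructor
      · intro hc; exact c3 ⟨b, hab.trans (TEquiv.congr hc (.refl b))⟩
      · intro hc
        exact c3 ⟨a, hab.trans ((TEquiv.comm a b).trans (TEquiv.congr hc (.refl a)))⟩

lemma rmul_sound {t t' s s' : Term α} (ht : Red t) (hs : Red s)
    (h1 : TEquiv t t') (h2 : TEquiv s s') : TEquiv (rmul t s) (rmul t' s') := by
  have hs' : Red s' → True := fun _ => trivial
  by_cases c1 : TEquiv t s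
  · rw [rmul, if_pos c1, rmul, if_pos (h1.symm.trans (c1.trans h2))]
    exact h1
  · have c1' : ¬ TEquiv t' s' := fun h => c1 (h1.trans (h.trans h2.symm))
    by_cases c2 : ∃ u, TEquiv s (.mul t u)
    · have c2' : ∃ u, TEquiv s' (.mul t' u) :=
        ⟨c2.choose, h2.symm.trans (c2.choose_spec.trans (TEquiv.congr h1 (.refl _)))⟩
      rw [rmul, if_neg c1, dif_pos c2, rmul, if_neg c1', dif_pos c2']
      exact cancel_wit hs c2.choose_spec
        (h2.trans (c2'.choose_spec.trans (TEquiv.congr h1.symm (.refl _))))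
    · have c2' : ¬ ∃ u, TEquiv s' (.mul t' u) := fun ⟨u, hu⟩ =>
        c2 ⟨u, h2.trans (hu.trans (TEquiv.congr h1.symm (.refl _)))⟩
      by_cases c3 : ∃ u, TEquiv t (.mul s u)
      · have c3' : ∃ u, TEquiv t' (.mul s' u) :=
          ⟨c3.choose, h1.symm.trans (c3.choose_spec.trans (TEquiv.congr h2 (.refl _)))⟩
        rw [rmul, if_neg c1, dif_neg c2, dif_pos c3, rmul, if_neg c1', dif_neg c2', dif_pos c3']
        exact cancel_wit ht c3.choose_spec
          (h1.trans (c3'.choose_spec.trans (TEquiv.congr h2.symm (.refl _))))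
      · have c3' : ¬ ∃ u, TEquiv t' (.mul s' u) := fun ⟨u, hu⟩ =>
          c3 ⟨u, h1.trans (hu.trans (TEquiv.congr h2.symm (.refl _)))⟩
        rw [rmul, if_neg c1, dif_neg c2, dif_neg c3, rmul, if_neg c1', dif_neg c2', dif_neg c3']
        exact TEquiv.congr h1 h2

end SP
namespace SP
open Steiner

variable {α : Type} {M : Type} [Steiner M]

lemma rank_lt_of_decomp {s t u : Term α} (h : TEquiv s (.mul t u)) :
    t.rank < s.rank ∧ u.rank < s.rank := by
  have := tequiv_rank h
  simp only [Term.rank] at this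
  omega

lemma rmul_comm {t s : Term α} (ht : Red t) (hs : Red s) :
    TEquiv (rmul t s) (rmul s t) := by
  by_cases c1 : TEquiv t s
  · rw [rmul, if_pos c1, rmul, if_pos c1.symm]; exact c1
  · have c1' : ¬ TEquiv s t := fun h => c1 h.symm
    by_cases c2 : ∃ u, TEquiv s (.mul t u)
    · have c2' : ¬ ∃ u, TEquiv t (.mul s u) := by
        rintro ⟨u, hu⟩
        have h1 := (rank_lt_of_decomp c2.choose_spec).1
        have h2 := (rank_lt_of_decomp hu).1
        omega
      rw [rmul, if_neg c1, dif_pos c2, rmul, if_neg c1', dif_neg c2', dif_pos c2]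
      exact TEquiv.refl _
    · by_cases c3 : ∃ u, TEquiv t (.mul s u)
      · rw [rmul, if_neg c1, dif_neg c2, dif_pos c3, rmul, if_neg c1', dif_pos c3]
        exact TEquiv.refl _
      · rw [rmul, if_neg c1, dif_neg c2, dif_neg c3, rmul, if_neg c1', dif_neg c3, dif_neg c2]
        exact TEquiv.comm t s

lemma rmul_lcancel {t s : Term α} (ht : Red t) (hs : Red s) :
    TEquiv (rmul t (rmul t s)) s := by
  by_cases c1 : TEquiv t s
  · have h0 : rmul t s = t := by rw [rmul, if_pos c1]
    rw [h0, rmul, if_pos (TEquiv.refl t)]; exact c1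
  · by_cases c2 : ∃ u, TEquiv s (.mul t u)
    · have h0 : rmul t s = c2.choose := by rw [rmul, if_neg c1, dif_pos c2]
      rw [h0]
      have spec : TEquiv s (.mul t c2.choose) := c2.choose_spec
      have d1 : ¬ TEquiv t c2.choose := not_self_decomp hs spec
      have d2 : ¬ ∃ v, TEquiv c2.choose (.mul t v) :=
        fun ⟨v, hv⟩ => not_nested_right hs spec hv
      have d3 : ¬ ∃ v, TEquiv t (.mul c2.choose v) :=
        fun ⟨v, hv⟩ => not_nested_left hs spec hv
      rw [rmul, if_neg d1, dif_neg d2, dif_neg d3]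
      exact spec.symm
    · by_cases c3 : ∃ u, TEquiv t (.mul s u)
      · have h0 : rmul t s = c3.choose := by rw [rmul, if_neg c1, dif_neg c2, dif_pos c3]
        rw [h0]
        have spec : TEquiv t (.mul s c3.choose) := c3.choose_spec
        have e1 : ¬ TEquiv t c3.choose := fun h => by
          have r1 := (rank_lt_of_decomp spec).2
          have r2 := tequiv_rank h
          omega
        have e2 : ¬ ∃ v, TEquiv c3.choose (.mul t v) := by
          rintro ⟨v, hv⟩
          have r1 := (rank_lt_of_decomp spec).2
          have r2 := (rank_lt_of_decomp hv).1
          omega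
        have e3 : ∃ v, TEquiv t (.mul c3.choose v) :=
          ⟨s, spec.trans (TEquiv.comm s c3.choose)⟩
        rw [rmul, if_neg e1, dif_neg e2, dif_pos e3]
        exact cancel_wit ht e3.choose_spec (spec.trans (TEquiv.comm s c3.choose))
      · have h0 : rmul t s = .mul t s := by rw [rmul, if_neg c1, dif_neg c2, dif_neg c3]
        rw [h0]
        have f1 : ¬ TEquiv t (.mul t s) := fun h => by
          have := tequiv_rank h
          simp only [Term.rank] at this
          omega
        have f2 : ∃ u, TEquiv (Term.mul t s) (.mul t u) := ⟨s, .refl _⟩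
        rw [rmul, if_neg f1, dif_pos f2]
        rcases tequiv_mul f2.choose_spec with ⟨_, h2⟩ | ⟨_, h2⟩
        · exact h2.symm
        · exact absurd h2.symm c1

lemma rmul_eval (e : α → M) (t s : Term α) :
    (rmul t s).eval e = t.eval e * s.eval e := by
  rw [rmul]
  split_ifs with c1 c2 c3
  · rw [tequiv_eval e c1, Steiner.idem]
  · have : s.eval e = t.eval e * (c2.choose.eval e) := tequiv_eval e c2.choose_spec
    rw [this, Steiner.lcancel]
  · have key : ∀ x y : M, (x * y) * x = y := fun x y => by
      rw [Steiner.comm, Steiner.lcancel]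
    have : t.eval e = s.eval e * (c3.choose.eval e) := tequiv_eval e c3.choose_spec
    rw [this]
    exact (key _ _).symm
  · rfl

lemma red_mul_not_right {t s : Term α} (h : Red (Term.mul t s)) :
    ¬ ∃ u, TEquiv s (.mul t u) := by
  rintro ⟨u, hu⟩
  exact (h.2.2.2.1 t u hu).1 (.refl t)

lemma red_mul_not_left {t s : Term α} (h : Red (Term.mul t s)) :
    ¬ ∃ u, TEquiv t (.mul s u) := by
  rintro ⟨u, hu⟩
  exact (h.2.2.2.2 s u hu).1 (.refl s)

lemma rmul_of_red {t s : Term α} (h : Red (Term.mul t s)) : rmul t s = .mul t s := by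
  rw [rmul, if_neg h.2.2.1, dif_neg (red_mul_not_right h), dif_neg (red_mul_not_left h)]

/-- Rank classification of the four branches of `rmul`. -/
lemma rmul_cases (t s : Term α) :
    (TEquiv t s ∧ rmul t s = t)
  ∨ ((rmul t s).rank < s.rank ∧ t.rank < s.rank)
  ∨ ((rmul t s).rank < t.rank ∧ s.rank < t.rank)
  ∨ rmul t s = .mul t s := by
  by_cases c1 : TEquiv t s
  · exact Or.inl ⟨c1, by rw [rmul, if_pos c1]⟩
  · by_cases c2 : ∃ u, TEquiv s (.mul t u)
    · refine Or.inr (Or.inl ?_)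
      rw [rmul, if_neg c1, dif_pos c2]
      have := rank_lt_of_decomp c2.choose_spec
      exact ⟨this.2, this.1⟩
    · by_cases c3 : ∃ u, TEquiv t (.mul s u)
      · refine Or.inr (Or.inr (Or.inl ?_))
        rw [rmul, if_neg c1, dif_neg c2, dif_pos c3]
        have := rank_lt_of_decomp c3.choose_spec
        exact ⟨this.2, this.1⟩
      · exact Or.inr (Or.inr (Or.inr (by rw [rmul, if_neg c1, dif_neg c2, dif_neg c3])))

end SP
namespace SP
open Steiner

variable {α : Type} {M : Type} [Steiner M]

/-- Reduced terms. -/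
def RT (α : Type) : Type := {t : Term α // Red t}

instance rtSetoid (α : Type) : Setoid (RT α) :=
  ⟨fun t s => TEquiv t.1 s.1, ⟨fun _ => .refl _, TEquiv.symm, TEquiv.trans⟩⟩

/-- The free Steiner quasigroup on `α`. -/
def FS (α : Type) : Type := Quotient (rtSetoid α)

def mkF (t : Term α) (h : Red t) : FS α := Quotient.mk _ ⟨t, h⟩

noncomputable instance : Mul (FS α) :=
  ⟨Quotient.map₂ (fun t s => ⟨rmul t.1 s.1, red_rmul t.2 s.2⟩)
    (fun t t' h1 s s' h2 => rmul_sound t.2 s.2 h1 h2)⟩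

lemma mkF_mul (t s : Term α) (ht : Red t) (hs : Red s) :
    mkF t ht * mkF s hs = mkF (rmul t s) (red_rmul ht hs) := rfl

noncomputable instance : Steiner (FS α) where
  comm x y := Quotient.inductionOn₂ x y fun t s =>
    Quotient.sound (rmul_comm t.2 s.2)
  idem x := Quotient.inductionOn x fun t =>
    Quotient.sound (show TEquiv (rmul t.1 t.1) t.1 by
      rw [rmul, if_pos (TEquiv.refl _)]; exact TEquiv.refl _)
  lcancel x y := Quotient.inductionOn₂ x y fun t s =>
    Quotient.sound (rmul_lcancel t.2 s.2)

def varF (a : α) : FS α := mkF (.var a) trivial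

lemma varF_inj : Function.Injective (varF : α → FS α) := by
  intro a b h
  have := Quotient.exact h
  have : TEquiv (Term.var a) (Term.var b) := this
  exact (tequiv_facEq this : a = b)

noncomputable def rankF : FS α → ℕ :=
  Quotient.lift (fun t : RT α => t.1.rank) (fun _ _ h => tequiv_rank h)

lemma rankF_mk (t : Term α) (h : Red t) : rankF (mkF t h) = t.rank := rfl

noncomputable def evalF (e : α → M) : FS α → M :=
  Quotient.lift (fun t : RT α => t.1.eval e) (fun _ _ h => tequiv_eval e h)

lemma evalF_mul (e : α → M) (x y : FS α) :
    evalF e (x * y) = evalF e x * evalF e y := by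
  induction x using Quotient.ind
  induction y using Quotient.ind
  exact rmul_eval e _ _

lemma evalF_var (e : α → M) (a : α) : evalF e (varF a) = e a := rfl

lemma mkF_mul_eq {t s : Term α} (h : Red (Term.mul t s)) :
    mkF (Term.mul t s) h = mkF t h.1 * mkF s h.2.1 := by
  rw [mkF_mul]
  exact Quotient.sound (show TEquiv (Term.mul t s) (rmul t s) by
    rw [rmul_of_red h]; exact TEquiv.refl _)

lemma fs_gen : ∀ (t : Term α) (h : Red t), mkF t h ∈ closure (Set.range (varF : α → FS α))
  | .var a, _ => mem_closure.base ⟨a, rfl⟩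
  | .mul t s, h => by
    rw [mkF_mul_eq h]
    exact (fs_gen t h.1).mul (fs_gen s h.2.1)

lemma fs_closure_univ : closure (Set.range (varF : α → FS α)) = Set.univ := by
  ext x
  simp only [Set.mem_univ, iff_true]
  induction x using Quotient.ind with
  | _ t => exact fs_gen t.1 t.2

/-- Two multiplicative maps agreeing on a generating set agree everywhere. -/
lemma hom_ext {N : Type} [Steiner N] {A : Set M} (hA : closure A = Set.univ)
    {g1 g2 : M → N} (hg1 : ∀ x y, g1 (x * y) = g1 x * g1 y)
    (hg2 : ∀ x y, g2 (x * y) = g2 x * g2 y)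
    (h : ∀ a ∈ A, g1 a = g2 a) : ∀ x, g1 x = g2 x := by
  have : ∀ x, mem_closure A x → g1 x = g2 x := by
    intro x hx
    induction hx with
    | base ha => exact h _ ha
    | mul _ _ ih1 ih2 => rw [hg1, hg2, ih1, ih2]
  intro x
  exact this x (by have : x ∈ closure A := hA ▸ Set.mem_univ x; exact this)

end SP
namespace SP
open Steiner

lemma irrefl_wo {M : Type} {r : M → M → Prop} (h : IsWellOrder M r) (x : M) : ¬ r x x :=
  fun hx => (h.toIsWellFounded.wf.asymmetric _ _ hx) hx

lemma forward_dir {M : Type} [Steiner M] {A : Set M} (hfb : FreeBase A) :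
    ∃ r : M → M → Prop, IsWellOrder M r ∧
      (∀ a b c b' c' : M, r b a → r c a → a = b * c → r b' a → r c' a →
        a = b' * c' → ({b, c} : Set M) = {b', c'}) ∧
      A = {a : M | ¬ ∃ b c : M, r b a ∧ r c a ∧ a = b * c} := by
  obtain ⟨hcl, hump⟩ := hfb
  obtain ⟨g, hg⟩ := hump (FS ↥A) (fun a => varF a)
  set e : FS ↥A → M := evalF Subtype.val with he
  have eg : ∀ x, e (g x) = x := by
    refine hom_ext hcl (fun x y => ?_) (fun _ _ => rfl) (fun a ha => ?_)
    · show evalF Subtype.val (g (x * y)) = evalF Subtype.val (g x) * evalF Subtype.val (g y)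
      rw [map_mul, evalF_mul]
    · show evalF Subtype.val (g a) = a
      rw [hg ⟨a, ha⟩]
      rfl
  have ge : ∀ z, g (e z) = z := by
    refine hom_ext fs_closure_univ (fun x y => ?_) (fun _ _ => rfl) ?_
    · show g (evalF Subtype.val (x * y)) = g (evalF Subtype.val x) * g (evalF Subtype.val y)
      rw [evalF_mul, map_mul]
    · rintro z ⟨b, rfl⟩
      show g (evalF Subtype.val (varF b)) = varF b
      have h1 : evalF Subtype.val (varF b) = b.1 := rfl
      rw [h1, hg b]
  have ginj : Function.Injective g := fun x y h => by rw [← eg x, ← eg y, h]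
  set rk : M → ℕ := fun x => rankF (g x) with hrk
  set σ : M → M → Prop := WellOrderingRel with hσ
  set r : M → M → Prop :=
    fun x y => Prod.Lex (· < ·) σ (rk x, x) (rk y, y) with hr
  have hwo : IsWellOrder M r := by
    have emb : r ↪r (Prod.Lex (· < ·) σ) :=
      ⟨⟨fun x => (rk x, x), fun x y h => congrArg Prod.snd h⟩, Iff.rfl⟩
    exact emb.isWellOrder
  have hrle : ∀ x y, r x y → rk x ≤ rk y := by
    intro x y hxy
    rcases Prod.lex_def.mp hxy with h | ⟨h, _⟩
    · exact le_of_lt h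
    · exact le_of_eq h
  have hirr : ∀ x, ¬ r x x := fun x => irrefl_wo hwo x
  have hne : ∀ x y, r x y → x ≠ y := fun x y h hxy => hirr y (hxy ▸ h)
  -- main classification of decompositions
  have main : ∀ (a : M) (t : Term ↥A) (htr : Red t), g a = mkF t htr →
      ∀ b c : M, r b a → r c a → a = b * c →
      ∃ t1 t2 : Term ↥A, ∃ h12 : Red (Term.mul t1 t2), t = Term.mul t1 t2 ∧
        ((g b = mkF t1 h12.1 ∧ g c = mkF t2 h12.2.1) ∨
         (g b = mkF t2 h12.2.1 ∧ g c = mkF t1 h12.1)) := by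
    intro a t htr hrep b c hb hc habc
    obtain ⟨u, hu⟩ := Quotient.exists_rep (g b)
    obtain ⟨v, hv⟩ := Quotient.exists_rep (g c)
    have hmul : g a = g b * g c := by rw [habc, map_mul]
    have hu' : g b = mkF u.1 u.2 := by rw [← hu]; rfl
    have hv' : g c = mkF v.1 v.2 := by rw [← hv]; rfl
    have hq : TEquiv (rmul u.1 v.1) t := by
      have h' : mkF (rmul u.1 v.1) (red_rmul u.2 v.2) = mkF t htr := by
        rw [← mkF_mul _ _ u.2 v.2, ← hu', ← hv', ← hrep]
        exact hmul.symm
      exact Quotient.exact h'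
    have hrkb : rk b = u.1.rank := by
      show rankF (g b) = u.1.rank
      rw [← hu]; rfl
    have hrkc : rk c = v.1.rank := by
      show rankF (g c) = v.1.rank
      rw [← hv]; rfl
    have hrka : rk a = t.rank := by
      show rankF (g a) = t.rank
      rw [hrep]; rfl
    have hble := hrle _ _ hb
    have hcle := hrle _ _ hc
    rcases rmul_cases u.1 v.1 with ⟨huv, heq⟩ | ⟨h1, h2⟩ | ⟨h1, h2⟩ | heq
    · exfalso
      have hut : TEquiv u.1 t := by rw [← heq]; exact hq
      have : g b = g a := by
        rw [← hu, hrep]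
        exact Quotient.sound hut
      exact hne _ _ hb (ginj this)
    · exfalso
      have := tequiv_rank hq
      omega
    · exfalso
      have := tequiv_rank hq
      omega
    · rw [heq] at hq
      cases t with
      | var x => exact absurd hq.symm not_tequiv_var_mul
      | mul t1 t2 =>
        have h12 : Red (Term.mul t1 t2) := htr
        refine ⟨t1, t2, h12, rfl, ?_⟩
        rcases tequiv_mul hq with ⟨a1, a2⟩ | ⟨a1, a2⟩
        · exact Or.inl ⟨by rw [← hu]; exact Quotient.sound a1,
            by rw [← hv]; exact Quotient.sound a2⟩
        · exact Or.inr ⟨by rw [← hu]; exact Quotient.sound a1,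
            by rw [← hv]; exact Quotient.sound a2⟩
  refine ⟨r, hwo, ?_, ?_⟩
  · -- HF property
    intro a b c b' c' hb hc habc hb' hc' habc'
    obtain ⟨⟨t, htr⟩, ht⟩ := Quotient.exists_rep (g a)
    have hrep : g a = mkF t htr := ht.symm
    obtain ⟨t1, t2, h12, rfl, hd⟩ := main a t htr hrep b c hb hc habc
    obtain ⟨t1', t2', h12', heq, hd'⟩ := main a _ h12 hrep b' c' hb' hc' habc'
    cases heq
    have pairs : ∀ x y : M,
        ((g x = mkF t1 h12.1 ∧ g y = mkF t2 h12.2.1) ∨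
         (g x = mkF t2 h12.2.1 ∧ g y = mkF t1 h12.1)) →
        ({x, y} : Set M) = {e (mkF t1 h12.1), e (mkF t2 h12.2.1)} := by
      rintro x y (⟨hx, hy⟩ | ⟨hx, hy⟩)
      · rw [← eg x, ← eg y, hx, hy]
      · rw [← eg x, ← eg y, hx, hy, Set.pair_comm]
    rw [pairs b c hd, pairs b' c' hd']
  · -- characterization of A
    ext a
    simp only [Set.mem_setOf_eq]
    constructor
    · intro ha
      rintro ⟨b, c, hb, hc, habc⟩
      have hredv : Red (Term.var (⟨a, ha⟩ : ↥A)) := trivial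
      have hrep : g a = mkF (.var ⟨a, ha⟩) hredv := hg ⟨a, ha⟩
      obtain ⟨t1, t2, h12, heq, -⟩ := main a _ hredv hrep b c hb hc habc
      cases heq
    · intro hnd
      by_contra ha
      obtain ⟨⟨t, htr⟩, ht⟩ := Quotient.exists_rep (g a)
      have hrep : g a = mkF t htr := ht.symm
      cases t with
      | var x =>
        have hax : a = x.1 := by
          conv_lhs => rw [← eg a, hrep]
          rfl
        exact ha (hax ▸ x.2)
      | mul t1 t2 =>
        apply hnd
        refine ⟨e (mkF t1 htr.1), e (mkF t2 htr.2.1), ?_, ?_, ?_⟩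
        · apply Prod.Lex.left
          show rk (e (mkF t1 htr.1)) < rk a
          have h1 : rk (e (mkF t1 htr.1)) = t1.rank := by
            show rankF (g (e (mkF t1 htr.1))) = t1.rank
            rw [ge]; rfl
          have h2 : rk a = (Term.mul t1 t2).rank := by
            show rankF (g a) = (Term.mul t1 t2).rank
            rw [hrep]; rfl
          rw [h1, h2]
          simp only [Term.rank]
          omega
        · apply Prod.Lex.left
          show rk (e (mkF t2 htr.2.1)) < rk a
          have h1 : rk (e (mkF t2 htr.2.1)) = t2.rank := by
            show rankF (g (e (mkF t2 htr.2.1))) = t2.rank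
            rw [ge]; rfl
          have h2 : rk a = (Term.mul t1 t2).rank := by
            show rankF (g a) = (Term.mul t1 t2).rank
            rw [hrep]; rfl
          rw [h1, h2]
          simp only [Term.rank]
          omega
        · conv_lhs => rw [← eg a, hrep, mkF_mul_eq htr]
          exact evalF_mul _ _ _

end SP
namespace SP
open Steiner

lemma st_key1 {N : Type} [Steiner N] (p q : N) : (p * q) * q = p := by
  rw [Steiner.comm, Steiner.comm p q, Steiner.lcancel]

lemma st_key2 {N : Type} [Steiner N] (p q : N) : (p * q) * p = q := by
  rw [Steiner.comm, Steiner.lcancel]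

lemma st_key3 {N : Type} [Steiner N] (p q : N) : p * (q * p) = q := by
  rw [Steiner.comm q p, Steiner.lcancel]

open Classical in
noncomputable def bmap {M : Type} [Steiner M] {A : Set M} {r : M → M → Prop}
    (wf : WellFounded r)
    (hEx : ∀ x, x ∉ A → ∃ b c, r b x ∧ r c x ∧ x = b * c)
    {N : Type} [Steiner N] (f : A → N) : M → N :=
  wf.fix (fun x ih =>
    if hx : x ∈ A then f ⟨x, hx⟩
    else
      ih (hEx x hx).choose (hEx x hx).choose_spec.choose_spec.1 *
      ih (hEx x hx).choose_spec.choose (hEx x hx).choose_spec.choose_spec.2.1)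

lemma bmap_mem {M : Type} [Steiner M] {A : Set M} {r : M → M → Prop}
    (wf : WellFounded r) (hEx : ∀ x, x ∉ A → ∃ b c, r b x ∧ r c x ∧ x = b * c)
    {N : Type} [Steiner N] (f : A → N) (x : M) (hx : x ∈ A) :
    bmap wf hEx f x = f ⟨x, hx⟩ := by
  rw [bmap, WellFounded.fix_eq]
  exact dif_pos hx

lemma bmap_not_mem {M : Type} [Steiner M] {A : Set M} {r : M → M → Prop}
    (wf : WellFounded r) (hEx : ∀ x, x ∉ A → ∃ b c, r b x ∧ r c x ∧ x = b * c)
    {N : Type} [Steiner N] (f : A → N) (x : M) (hx : x ∉ A) :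
    ∃ b c : M, (r b x ∧ r c x ∧ x = b * c) ∧
      bmap wf hEx f x = bmap wf hEx f b * bmap wf hEx f c := by
  refine ⟨(hEx x hx).choose, (hEx x hx).choose_spec.choose,
    ⟨(hEx x hx).choose_spec.choose_spec.1, (hEx x hx).choose_spec.choose_spec.2.1,
     (hEx x hx).choose_spec.choose_spec.2.2⟩, ?_⟩
  conv_lhs => rw [bmap, WellFounded.fix_eq]
  rw [dif_neg hx]
  rfl

lemma backward_dir {M : Type} [Steiner M] {A : Set M}
    (r : M → M → Prop) (hwo : IsWellOrder M r)
    (hf : ∀ a b c b' c' : M, r b a → r c a → a = b * c → r b' a → r c' a →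
        a = b' * c' → ({b, c} : Set M) = {b', c'})
    (hA : A = {a : M | ¬ ∃ b c : M, r b a ∧ r c a ∧ a = b * c}) :
    FreeBase A := by
  haveI : IsWellOrder M r := hwo
  have wf : WellFounded r := hwo.toIsWellFounded.wf
  have hEx : ∀ x, x ∉ A → ∃ b c, r b x ∧ r c x ∧ x = b * c := by
    intro x hx
    rw [hA] at hx
    exact not_not.mp hx
  constructor
  · -- generation
    ext x
    simp only [Set.mem_univ, iff_true]
    refine wf.induction (C := fun x => x ∈ closure A) x ?_
    intro x ih
    by_cases hx : x ∈ A
    · exact mem_closure.base hx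
    · obtain ⟨b, c, hb, hc, hbc⟩ := hEx x hx
      rw [hbc]
      exact (ih b hb).mul (ih c hc)
  · -- universal property
    intro N _ f
    set g : M → N := bmap wf hEx f with hg
    have hzx : ∀ x y : M, x ≠ y → x * y ≠ x := by
      intro x y hxy h
      have h2 := Steiner.lcancel x y
      rw [h, Steiner.idem] at h2
      exact hxy h2
    have hzy : ∀ x y : M, x ≠ y → x * y ≠ y := by
      intro x y hxy h
      have h2 := st_key1 x y
      rw [h, Steiner.idem] at h2
      exact hxy h2.symm
    have ymax : ∀ x y : M, r x y → r (x * y) y → g (x * y) = g x * g y := by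
      intro x y hxy hzy'
      have key : y = x * (x * y) := (Steiner.lcancel x y).symm
      have hyA : y ∉ A := by
        rw [hA]
        intro hy
        exact hy ⟨x, x * y, hxy, hzy', key⟩
      obtain ⟨b, c, ⟨hb, hc, hbc⟩, hmul⟩ := bmap_not_mem wf hEx f y hyA
      rw [← hg] at hmul
      have hpair := hf y b c x (x * y) hb hc hbc hxy hzy' key
      rcases Set.pair_eq_pair_iff.mp hpair with ⟨rfl, rfl⟩ | ⟨rfl, rfl⟩
      · rw [hmul, Steiner.lcancel]
      · rw [hmul, st_key3]
    have hom : ∀ x y : M, g (x * y) = g x * g y := by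
      intro x y
      by_cases hxy : x = y
      · subst hxy
        rw [Steiner.idem, Steiner.idem]
      · rcases _root_.trichotomous (r := r) (x * y) x with h1 | h1 | h1
        · rcases _root_.trichotomous (r := r) x y with h2 | h2 | h2
          · -- r z x and r x y : y strictly greatest
            exact ymax x y h2 (_root_.trans h1 h2)
          · exact absurd h2 hxy
          · -- x strictly greatest: use ymax on (y, x)
            have hc : y * x = x * y := Steiner.comm y x
            have := ymax y x h2 (by rw [hc]; exact h1)
            rw [hc] at this
            rw [this, Steiner.comm (g y) (g x)]
        · exact absurd h1 (hzx x y hxy)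
        · rcases _root_.trichotomous (r := r) y (x * y) with h2 | h2 | h2
          · -- x*y strictly greatest
            have hzA : x * y ∉ A := by
              rw [hA]
              intro hz
              exact hz ⟨x, y, h1, h2, rfl⟩
            obtain ⟨b, c, ⟨hb, hc, hbc⟩, hmul⟩ := bmap_not_mem wf hEx f (x * y) hzA
            rw [← hg] at hmul
            have hpair := hf (x * y) b c x y hb hc hbc h1 h2 rfl
            rcases Set.pair_eq_pair_iff.mp hpair with ⟨rfl, rfl⟩ | ⟨rfl, rfl⟩
            · exact hmul
            · rw [hmul, Steiner.comm]
          · exact absurd h2.symm (hzy x y hxy)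
          · -- y strictly greatest
            exact ymax x y (_root_.trans h1 h2) h2
    refine ⟨⟨g, hom⟩, fun a => ?_⟩
    exact bmap_mem wf hEx f a.1 a.2

end SP

/-- `A` is a free base of `M` iff there is a well-ordered HF-ordering of `M`
such that `A` is the set of elements that are not a product of two smaller
elements. -/
theorem stmt7 {M : Type} [Steiner M] (A : Set M) :
    FreeBase A ↔ ∃ r : M → M → Prop, IsWellOrder M r ∧
      (∀ a b c b' c' : M, r b a → r c a → a = b * c → r b' a → r c' a →
        a = b' * c' → ({b, c} : Set M) = {b', c'}) ∧
      A = {a : M | ¬ ∃ b c : M, r b a ∧ r c a ∧ a = b * c} := by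
  constructor
  · exact fun h => SP.forward_dir h
  · rintro ⟨r, hwo, hf, hA⟩
    exact SP.backward_dir r hwo hf hA
end

section
/- Every substructure (subquasigroup) of a free Steiner quasigroup is itself a free Steiner quasigroup. -/
/-!
A hyperfree well-order `r` on a Steiner quasigroup (every element is the product of at most one
pair of `r`-smaller elements) makes it free on the elements that are not such a product: a map on
them extends along `r` by well-founded recursion, and the extension is multiplicative because each
of `x`, `y`, `x * y` is the product of the other two, so only the case where `x * y` is the largest
needs checking. Hyperfree orders pull back along injective homomorphisms, in particular to every
subquasigroup, so it is enough to embed a free Steiner quasigroup into one with a hyperfree order.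
The normal terms over the base (terms in which no factor cancels, the two factors of each product
ordered by a fixed well-order) are such a model, ordered by rank: a product of two normal terms
that does not have smaller rank than its factors is the term built from them, which determines
the factors. Evaluation of normal terms is a left inverse of the canonical homomorphism into them.
-/

open Function

namespace Steiner

variable {M N : Type} [Steiner M] [Steiner N]

theorem mul_mul_cancel_right (x y : M) : x * y * y = x := by
  rw [comm (x * y) y, comm x y, lcancel]

theorem mul_ne_right {x y : M} (h : x ≠ y) : x * y ≠ y := fun e =>
  h (by rw [← mul_mul_cancel_right x y, e, idem])

theorem eqOn_closure {f g : M →ₙ* N} {A : Set M} (h : Set.EqOn f g A) :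
    Set.EqOn f g (closure A) := by
  intro x hx
  induction hx with
  | base ha => exact h ha
  | mul _ _ iha ihb => rw [map_mul, map_mul, iha, ihb]

theorem map_mul_of_map_mul_of_lt (r : M → M → Prop) [Std.Trichotomous r] [IsTrans M r]
    {g : M → N} (hg : ∀ x y, r x (x * y) → r y (x * y) → g (x * y) = g x * g y) (x y : M) :
    g (x * y) = g x * g y := by
  obtain rfl | hxy := eq_or_ne x y
  · rw [idem, idem]
  wlog hlt : r x y generalizing x y
  · rw [comm x, comm (g x)]
    exact this y x hxy.symm (((trichotomous_of r x y).resolve_left hlt).resolve_left hxy)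
  rcases trichotomous_of r y (x * y) with hyz | hyz | hzy
  · exact hg x y (trans_of r hlt hyz) hyz
  · exact absurd hyz.symm (mul_ne_right hxy)
  · -- here `y = x * (x * y)` is the largest of the three
    have hy := hg x (x * y) (by rwa [lcancel]) (by rwa [lcancel])
    rw [lcancel] at hy
    rw [hy, lcancel]

structure IsHyperfree (r : M → M → Prop) : Prop where
  isWellOrder : IsWellOrder M r
  factor_unique : ∀ {z x y x' y' : M}, r x z → r y z → z = x * y →
    r x' z → r y' z → z = x' * y' → x = x' ∧ y = y' ∨ x = y' ∧ y = x'

theorem IsHyperfree.onFun {r : N → N → Prop} (h : IsHyperfree r) (f : M →ₙ* N)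
    (hf : Injective f) : IsHyperfree (r.onFun f) where
  isWellOrder := haveI := h.isWellOrder; hf.isWellOrder r
  factor_unique hx hy hz hx' hy' hz' := by
    simpa only [hf.eq_iff] using
      h.factor_unique hx hy (by rw [hz, map_mul]) hx' hy' (by rw [hz', map_mul])

def IsProductBelow (r : M → M → Prop) (z : M) : Prop :=
  ∃ x y, r x z ∧ r y z ∧ z = x * y

namespace IsHyperfree

variable {r : M → M → Prop}

open Classical in
noncomputable def lift (h : IsHyperfree r) (f : {z | ¬ IsProductBelow r z} → N) : M → N :=
  h.isWellOrder.wf.fix fun z ih =>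
    if hz : IsProductBelow r z then
      ih hz.choose hz.choose_spec.choose_spec.1 *
        ih hz.choose_spec.choose hz.choose_spec.choose_spec.2.1
    else f ⟨z, hz⟩

theorem lift_of_not_isProductBelow (h : IsHyperfree r) (f : {z | ¬ IsProductBelow r z} → N)
    {z : M} (hz : ¬ IsProductBelow r z) : h.lift f z = f ⟨z, hz⟩ := by
  rw [lift, WellFounded.fix_eq, dif_neg hz]

theorem lift_mul_of_lt (h : IsHyperfree r) (f : {z | ¬ IsProductBelow r z} → N) {x y : M}
    (hx : r x (x * y)) (hy : r y (x * y)) : h.lift f (x * y) = h.lift f x * h.lift f y := by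
  have hz : IsProductBelow r (x * y) := ⟨x, y, hx, hy, rfl⟩
  rw [lift, WellFounded.fix_eq, dif_pos hz]
  change h.lift f hz.choose * h.lift f hz.choose_spec.choose = h.lift f x * h.lift f y
  obtain ⟨hx', hy', hz'⟩ := hz.choose_spec.choose_spec
  rcases h.factor_unique hx' hy' hz' hx hy rfl with ⟨e1, e2⟩ | ⟨e1, e2⟩
  · rw [e2, e1]
  · rw [e2, e1, comm]

theorem freeBase (h : IsHyperfree r) : FreeBase {z | ¬ IsProductBelow r z} := by
  have := h.isWellOrder
  refine ⟨Set.eq_univ_of_forall fun z => ?_, fun N _ f =>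
    ⟨⟨h.lift f, map_mul_of_map_mul_of_lt r (fun _ _ => h.lift_mul_of_lt f)⟩,
      fun a => h.lift_of_not_isProductBelow f a.2⟩⟩
  induction z using h.isWellOrder.wf.induction with
  | _ z ih =>
    by_cases hz : IsProductBelow r z
    · obtain ⟨x, y, hx, hy, rfl⟩ := hz
      exact mem_closure.mul (ih x hx) (ih y hy)
    · exact mem_closure.base hz

end IsHyperfree

end Steiner

namespace Steiner.Term

open Classical

variable {α : Type} {t s v t' s' : Term α}

noncomputable def cofactor (t : Term α) : Term α → Option (Term α)
  | .var _ => none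
  | .mul u w => if u = t then some w else if w = t then some u else none

theorem cofactor_eq_some : t.cofactor s = some v ↔ s = .mul t v ∨ s = .mul v t := by
  cases s with
  | var x => simp [cofactor]
  | mul u w =>
    simp only [cofactor, Term.mul.injEq]
    split_ifs <;> aesop

theorem rank_lt_of_cofactor_eq_some (h : t.cofactor s = some v) :
    t.rank < s.rank ∧ v.rank < s.rank := by
  rcases cofactor_eq_some.1 h with rfl | rfl <;> simp [rank]

theorem cofactor_self (t : Term α) : t.cofactor t = none :=
  Option.eq_none_iff_forall_ne_some.2 fun _ h => (rank_lt_of_cofactor_eq_some h).1.false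

theorem cofactor_eq_none_of_cofactor_eq_some (h : s.cofactor t = some v) :
    t.cofactor s = none :=
  Option.eq_none_iff_forall_ne_some.2 fun _ h' =>
    (rank_lt_of_cofactor_eq_some h).1.not_gt (rank_lt_of_cofactor_eq_some h').1

noncomputable def orientedMul (t s : Term α) : Term α :=
  if WellOrderingRel t s then .mul t s else .mul s t

theorem orientedMul_of_rel (h : WellOrderingRel t s) : orientedMul t s = .mul t s := if_pos h

theorem orientedMul_comm (h : t ≠ s) : orientedMul t s = orientedMul s t := by
  rcases trichotomous_of WellOrderingRel t s with hr | rfl | hr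
  · rw [orientedMul_of_rel hr, orientedMul, if_neg (asymm_of WellOrderingRel hr)]
  · exact absurd rfl h
  · rw [orientedMul_of_rel hr, orientedMul, if_neg (asymm_of WellOrderingRel hr)]

theorem orientedMul_eq_or (t s : Term α) :
    orientedMul t s = .mul t s ∨ orientedMul t s = .mul s t := by
  unfold orientedMul; split_ifs <;> simp

theorem cofactor_orientedMul (t s : Term α) : t.cofactor (orientedMul t s) = some s :=
  cofactor_eq_some.2 (orientedMul_eq_or t s)

theorem eq_and_eq_or_of_orientedMul_eq (h : orientedMul t s = orientedMul t' s') :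
    t = t' ∧ s = s' ∨ t = s' ∧ s = t' := by
  rcases orientedMul_eq_or t s with h1 | h1 <;> rcases orientedMul_eq_or t' s' with h2 | h2 <;>
    rw [h1, h2, Term.mul.injEq] at h <;> tauto

inductive IsNormal : Term α → Prop
  | var (x : α) : IsNormal (.var x)
  | mul {u w : Term α} : IsNormal u → IsNormal w → WellOrderingRel u w →
      u.cofactor w = none → w.cofactor u = none → IsNormal (.mul u w)

theorem IsNormal.orientedMul (ht : t.IsNormal) (hs : s.IsNormal) (hne : t ≠ s)
    (hts : t.cofactor s = none) (hst : s.cofactor t = none) : (orientedMul t s).IsNormal := by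
  rcases trichotomous_of WellOrderingRel t s with hr | rfl | hr
  · rw [orientedMul_of_rel hr]; exact .mul ht hs hr hts hst
  · exact absurd rfl hne
  · rw [orientedMul_comm hne, orientedMul_of_rel hr]; exact .mul hs ht hr hst hts

theorem IsNormal.of_cofactor_eq_some (hs : s.IsNormal) (h : t.cofactor s = some v) :
    v.IsNormal := by
  rcases cofactor_eq_some.1 h with rfl | rfl <;> cases hs <;> assumption

noncomputable def normMul (t s : Term α) : Term α :=
  if t = s then t else
    match t.cofactor s, s.cofactor t with
    | some v, _ => v
    | none, some v => v
    | none, none => orientedMul t s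

theorem normMul_self (t : Term α) : normMul t t = t := if_pos rfl

theorem normMul_of_cofactor_left (h : t.cofactor s = some v) : normMul t s = v := by
  have hne : t ≠ s := by rintro rfl; simp [cofactor_self] at h
  simp [normMul, hne, h]

theorem normMul_of_cofactor_right (h : s.cofactor t = some v) : normMul t s = v := by
  have hne : t ≠ s := by rintro rfl; simp [cofactor_self] at h
  simp [normMul, hne, h, cofactor_eq_none_of_cofactor_eq_some h]

theorem normMul_of_cofactor_eq_none (hne : t ≠ s) (hts : t.cofactor s = none)
    (hst : s.cofactor t = none) : normMul t s = orientedMul t s := by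
  simp [normMul, hne, hts, hst]

theorem normMul_cases (t s : Term α) :
    t = s ∧ normMul t s = t ∨ t.cofactor s = some (normMul t s) ∨
      s.cofactor t = some (normMul t s) ∨
      t ≠ s ∧ t.cofactor s = none ∧ s.cofactor t = none ∧
        normMul t s = orientedMul t s := by
  by_cases hne : t = s
  · exact .inl ⟨hne, if_pos hne⟩
  cases hts : t.cofactor s with
  | some v => exact .inr (.inl (by rw [normMul_of_cofactor_left hts]))
  | none =>
    cases hst : s.cofactor t with
    | some v => exact .inr (.inr (.inl (by rw [normMul_of_cofactor_right hst])))
    | none => exact .inr (.inr (.inr ⟨hne, rfl, rfl, normMul_of_cofactor_eq_none hne hts hst⟩))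

theorem normMul_comm (t s : Term α) : normMul t s = normMul s t := by
  rcases normMul_cases t s with ⟨rfl, -⟩ | h | h | ⟨hne, hts, hst, h⟩
  · rfl
  · exact (normMul_of_cofactor_right h).symm
  · exact (normMul_of_cofactor_left h).symm
  · rw [h, normMul_of_cofactor_eq_none hne.symm hst hts, orientedMul_comm hne]

theorem IsNormal.normMul (ht : t.IsNormal) (hs : s.IsNormal) : (normMul t s).IsNormal := by
  rcases normMul_cases t s with ⟨-, h⟩ | h | h | ⟨hne, hts, hst, h⟩
  · rwa [h]
  · exact hs.of_cofactor_eq_some h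
  · exact ht.of_cofactor_eq_some h
  · rw [h]; exact ht.orientedMul hs hne hts hst

theorem IsNormal.normMul_of_cofactor_eq_some (hs : s.IsNormal) (h : t.cofactor s = some v) :
    Term.normMul t v = s := by
  rcases cofactor_eq_some.1 h with rfl | rfl <;> cases hs with
  | mul _ _ hr h1 h2 =>
    first
    | rw [normMul_of_cofactor_eq_none (ne_of_irrefl hr) h1 h2, orientedMul_of_rel hr]
    | rw [normMul_of_cofactor_eq_none (ne_of_irrefl' hr) h2 h1, orientedMul_comm
        (ne_of_irrefl' hr), orientedMul_of_rel hr]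

theorem normMul_normMul_cancel (t : Term α) (hs : s.IsNormal) : normMul t (normMul t s) = s := by
  rcases normMul_cases t s with ⟨rfl, h⟩ | h | h | ⟨-, -, -, h⟩
  · rw [h, h]
  · exact hs.normMul_of_cofactor_eq_some h
  · exact normMul_of_cofactor_right (cofactor_eq_some.2 (cofactor_eq_some.1 h).symm)
  · rw [h]; exact normMul_of_cofactor_left (cofactor_orientedMul t s)

theorem eval_of_cofactor_eq_some {M : Type} [Steiner M] (e : α → M) (h : t.cofactor s = some v) :
    v.eval e = t.eval e * s.eval e := by
  rcases cofactor_eq_some.1 h with rfl | rfl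
  · exact (lcancel _ _).symm
  · rw [eval, comm (v.eval e), lcancel]

theorem eval_normMul {M : Type} [Steiner M] (e : α → M) (t s : Term α) :
    (normMul t s).eval e = t.eval e * s.eval e := by
  rcases normMul_cases t s with ⟨rfl, h⟩ | h | h | ⟨-, -, -, h⟩
  · rw [h, idem]
  · exact eval_of_cofactor_eq_some e h
  · rw [comm]; exact eval_of_cofactor_eq_some e h
  · rcases orientedMul_eq_or t s with h' | h' <;> rw [h, h', eval]
    exact comm _ _

theorem normMul_eq_orientedMul_of_rank_le (hne : t ≠ s) (ht : t.rank ≤ (normMul t s).rank)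
    (hs : s.rank ≤ (normMul t s).rank) : normMul t s = orientedMul t s := by
  rcases normMul_cases t s with ⟨h, -⟩ | h | h | ⟨-, -, -, h⟩
  · exact absurd h hne
  · exact absurd hs (rank_lt_of_cofactor_eq_some h).2.not_ge
  · exact absurd ht (rank_lt_of_cofactor_eq_some h).2.not_ge
  · exact h

end Steiner.Term

namespace Steiner

variable {α : Type}

def NormalTerm (α : Type) : Type := {t : Term α // t.IsNormal}

namespace NormalTerm

noncomputable instance : Steiner (NormalTerm α) where
  mul a b := ⟨a.1.normMul b.1, a.2.normMul b.2⟩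
  comm a b := Subtype.ext (Term.normMul_comm a.1 b.1)
  idem a := Subtype.ext (Term.normMul_self a.1)
  lcancel a b := Subtype.ext (Term.normMul_normMul_cancel a.1 b.2)

noncomputable def evalHom {M : Type} [Steiner M] (e : α → M) : NormalTerm α →ₙ* M where
  toFun a := a.1.eval e
  map_mul' a b := Term.eval_normMul e a.1 b.1

def rankLex : NormalTerm α → NormalTerm α → Prop :=
  (Prod.Lex (· < ·) WellOrderingRel).onFun fun a => (a.1.rank, a.1)

theorem rank_le_of_rankLex {a b : NormalTerm α} (h : rankLex a b) : a.1.rank ≤ b.1.rank := by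
  rcases Prod.lex_def.1 h with h | ⟨h, -⟩
  · exact h.le
  · exact h.le

theorem isWellOrder_rankLex : IsWellOrder (NormalTerm α) rankLex :=
  Injective.isWellOrder (f := fun a : NormalTerm α => (a.1.rank, a.1)) _
    fun _ _ h => Subtype.ext (Prod.ext_iff.1 h).2

theorem val_mul_eq_orientedMul {x y : NormalTerm α} (hx : rankLex x (x * y))
    (hy : rankLex y (x * y)) : (x * y).1 = x.1.orientedMul y.1 := by
  have := isWellOrder_rankLex (α := α)
  have hne : x ≠ y := by
    rintro rfl
    rw [idem] at hx
    exact irrefl_of rankLex x hx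
  exact Term.normMul_eq_orientedMul_of_rank_le (fun h => hne (Subtype.ext h))
    (rank_le_of_rankLex hx) (rank_le_of_rankLex hy)

theorem isHyperfree_rankLex : IsHyperfree (rankLex (α := α)) where
  isWellOrder := isWellOrder_rankLex
  factor_unique {z x y x' y'} hx hy hz hx' hy' hz' := by
    subst hz
    rw [hz'] at hx' hy'
    have h := (val_mul_eq_orientedMul hx hy).symm.trans
      ((congrArg Subtype.val hz').trans (val_mul_eq_orientedMul hx' hy'))
    rcases Term.eq_and_eq_or_of_orientedMul_eq h with ⟨h1, h2⟩ | ⟨h1, h2⟩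
    · exact .inl ⟨Subtype.ext h1, Subtype.ext h2⟩
    · exact .inr ⟨Subtype.ext h1, Subtype.ext h2⟩

end NormalTerm

theorem FreeBase.exists_injective_normalTerm {M : Type} [Steiner M] {A : Set M}
    (hA : FreeBase A) : ∃ φ : M →ₙ* NormalTerm A, Injective φ := by
  obtain ⟨φ, hφ⟩ := hA.2 (NormalTerm A) fun a => ⟨.var a, .var a⟩
  have hinv : LeftInverse (NormalTerm.evalHom Subtype.val) φ := fun x =>
    eqOn_closure (f := (NormalTerm.evalHom Subtype.val).comp φ) (g := MulHom.id M)
      (fun a ha => congrArg (·.1.eval Subtype.val) (hφ ⟨a, ha⟩)) (hA.1 ▸ Set.mem_univ x)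
  exact ⟨φ, hinv.injective⟩

end Steiner

open Steiner
/-- Every subquasigroup of a free Steiner quasigroup is free. -/
theorem stmt8 {M : Type} [Steiner M] (hM : ∃ A : Set M, FreeBase A)
    (T : Set M) :
    ∃ B : Set (closure T), FreeBase B := by
  obtain ⟨A, hA⟩ := hM
  obtain ⟨φ, hφ⟩ := hA.exists_injective_normalTerm
  have hr : IsHyperfree (NormalTerm.rankLex.onFun φ) :=
    NormalTerm.isHyperfree_rankLex.onFun φ hφ
  let ι : closure T →ₙ* M := ⟨Subtype.val, fun _ _ => rfl⟩
  exact ⟨_, (hr.onFun ι Subtype.val_injective).freeBase⟩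
end

section
/- Every free Steiner quasigroup is unconfined as a Steiner triple system: every finite non-empty subset A' contains an element belonging to at most one block of A'. -/
open Steiner


namespace SFree

variable {α : Type}

/-- Binary trees over `α`. -/
inductive T (α : Type) : Type
  | var : α → T α
  | node : T α → T α → T α

namespace T

def size : T α → ℕ
  | var _ => 0
  | node s t => size s + size t + 1

def isChild (x : T α) : T α → Prop
  | var _ => False
  | node s t => x = s ∨ x = t

/-- A canonical unordered-pair representative. -/
noncomputable def opair (s t : T α) : T α × T α := (Sym2.mk s t).out

lemma opair_swap (s t : T α) : opair s t = opair t s := by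
  unfold opair; rw [Sym2.eq_swap]

lemma opair_spec (s t : T α) : opair s t = (s, t) ∨ opair s t = (t, s) := by
  have h : Sym2.mk (opair s t).1 (opair s t).2 = Sym2.mk s t := by
    unfold opair
    exact Quot.out_eq _
  rcases (Sym2.mk_eq_mk_iff (p := opair s t) (q := (s, t))).mp h with h | h
  · exact Or.inl h
  · exact Or.inr h

/-- Canonical reduced trees. -/
def Canon : T α → Prop
  | var _ => True
  | node s t => Canon s ∧ Canon t ∧ opair s t = (s, t) ∧ s ≠ t ∧
      ¬ isChild s t ∧ ¬ isChild t s

lemma canon_var (a : α) : Canon (var a) := trivial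

lemma canon_node_iff {s t : T α} : Canon (node s t) ↔
    Canon s ∧ Canon t ∧ opair s t = (s, t) ∧ s ≠ t ∧
      ¬ isChild s t ∧ ¬ isChild t s := Iff.rfl

lemma isChild_iff {x t : T α} :
    isChild x t ↔ (∃ u, t = node x u) ∨ (∃ u, t = node u x) := by
  cases t with
  | var a => simp [isChild]
  | node u v =>
    simp only [isChild]
    constructor
    · rintro (rfl | rfl)
      · exact Or.inl ⟨v, rfl⟩
      · exact Or.inr ⟨u, rfl⟩
    · rintro (⟨w, h⟩ | ⟨w, h⟩) <;> injection h with h1 h2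
      · exact Or.inl h1.symm
      · exact Or.inr h2.symm

lemma size_lt_left (s t : T α) : size s < size (node s t) := by
  simp [size]

lemma size_lt_right (s t : T α) : size t < size (node s t) := by
  simp [size]

lemma ne_node_left (s t : T α) : node s t ≠ s := fun h => by
  have := congrArg size h; simp [size] at this; omega

lemma ne_node_right (s t : T α) : node s t ≠ t := fun h => by
  have := congrArg size h; simp [size] at this; omega

open scoped Classical in
/-- Multiplication on trees. -/
noncomputable def m (s t : T α) : T α :=
  if s = t then s
  else if h : ∃ u, t = node s u then h.choose
  else if h : ∃ u, t = node u s then h.choose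
  else if h : ∃ u, s = node t u then h.choose
  else if h : ∃ u, s = node u t then h.choose
  else node (opair s t).1 (opair s t).2

lemma m_self (s : T α) : m s s = s := if_pos rfl

lemma no_ex_left {s t : T α} (h : size t ≤ size s) : ¬ ∃ u, t = node s u := by
  rintro ⟨u, hu⟩
  have := congrArg size hu; simp [size] at this; omega

lemma no_ex_right {s t : T α} (h : size t ≤ size s) : ¬ ∃ u, t = node u s := by
  rintro ⟨u, hu⟩
  have := congrArg size hu; simp [size] at this; omega

lemma m_nl (s u : T α) : m s (node s u) = u := by
  have hne : s ≠ node s u := fun h => (ne_node_left s u) h.symm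
  have h : ∃ w, node s u = node s w := ⟨u, rfl⟩
  rw [m, if_neg hne, dif_pos h]
  have := h.choose_spec
  injection this with h1 h2
  exact h2.symm

lemma m_nr {s u : T α} (hu : u ≠ s) : m s (node u s) = u := by
  have hne : s ≠ node u s := fun h => (ne_node_right u s) h.symm
  have h1 : ¬ ∃ w, node u s = node s w := by
    rintro ⟨w, hw⟩; injection hw with e1 e2; exact hu e1
  have h : ∃ w, node u s = node w s := ⟨u, rfl⟩
  rw [m, if_neg hne, dif_neg h1, dif_pos h]
  have := h.choose_spec
  injection this with e1 e2
  exact e1.symm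

lemma m_ln (t u : T α) : m (node t u) t = u := by
  have hne : node t u ≠ t := ne_node_left t u
  have h1 : ¬ ∃ w, t = node (node t u) w := by
    rintro ⟨w, hw⟩
    have := congrArg size hw; simp [size] at this; omega
  have h2 : ¬ ∃ w, t = node w (node t u) := by
    rintro ⟨w, hw⟩
    have := congrArg size hw; simp [size] at this; omega
  have h : ∃ w, node t u = node t w := ⟨u, rfl⟩
  rw [m, if_neg hne, dif_neg h1, dif_neg h2, dif_pos h]
  have := h.choose_spec
  injection this with e1 e2
  exact e2.symm

lemma m_rn {t u : T α} (hu : u ≠ t) : m (node u t) t = u := by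
  have hne : node u t ≠ t := ne_node_right u t
  have h1 : ¬ ∃ w, t = node (node u t) w := by
    rintro ⟨w, hw⟩
    have := congrArg size hw; simp [size] at this; omega
  have h2 : ¬ ∃ w, t = node w (node u t) := by
    rintro ⟨w, hw⟩
    have := congrArg size hw; simp [size] at this; omega
  have h3 : ¬ ∃ w, node u t = node t w := by
    rintro ⟨w, hw⟩; injection hw with e1 e2; exact hu e1
  have h : ∃ w, node u t = node w t := ⟨u, rfl⟩
  rw [m, if_neg hne, dif_neg h1, dif_neg h2, dif_neg h3, dif_pos h]
  have := h.choose_spec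
  injection this with e1 e2
  exact e1.symm

lemma m_gen {s t : T α} (hst : s ≠ t) (h2 : ¬ isChild s t) (h3 : ¬ isChild t s) :
    m s t = node (opair s t).1 (opair s t).2 := by
  have e1 : ¬ ∃ u, t = node s u := fun ⟨u, hu⟩ => h2 (isChild_iff.mpr (Or.inl ⟨u, hu⟩))
  have e2 : ¬ ∃ u, t = node u s := fun ⟨u, hu⟩ => h2 (isChild_iff.mpr (Or.inr ⟨u, hu⟩))
  have e3 : ¬ ∃ u, s = node t u := fun ⟨u, hu⟩ => h3 (isChild_iff.mpr (Or.inl ⟨u, hu⟩))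
  have e4 : ¬ ∃ u, s = node u t := fun ⟨u, hu⟩ => h3 (isChild_iff.mpr (Or.inr ⟨u, hu⟩))
  rw [m, if_neg hst, dif_neg e1, dif_neg e2, dif_neg e3, dif_neg e4]

lemma m_comm {s t : T α} : m s t = m t s := by
  by_cases hst : s = t
  · subst hst; rfl
  by_cases h1 : ∃ u, t = node s u
  · obtain ⟨u, rfl⟩ := h1
    rw [m_nl, m_ln]
  by_cases h2 : ∃ u, t = node u s
  · obtain ⟨u, rfl⟩ := h2
    have hu : u ≠ s := fun h => h1 ⟨s, by rw [h]⟩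
    rw [m_nr hu, m_rn hu]
  by_cases h3 : ∃ u, s = node t u
  · obtain ⟨u, rfl⟩ := h3
    rw [m_ln, m_nl]
  by_cases h4 : ∃ u, s = node u t
  · obtain ⟨u, rfl⟩ := h4
    have hu : u ≠ t := fun h => h3 ⟨t, by rw [h]⟩
    rw [m_rn hu, m_nr hu]
  · have hcs : ¬ isChild s t := fun h => by
      rcases isChild_iff.mp h with h | h
      exacts [h1 h, h2 h]
    have hct : ¬ isChild t s := fun h => by
      rcases isChild_iff.mp h with h | h
      exacts [h3 h, h4 h]
    rw [m_gen hst hcs hct, m_gen (Ne.symm hst) hct hcs, opair_swap]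

lemma m_canon {s t : T α} (hs : Canon s) (ht : Canon t) : Canon (m s t) := by
  by_cases hst : s = t
  · subst hst; rw [m_self]; exact hs
  by_cases h1 : ∃ u, t = node s u
  · obtain ⟨u, rfl⟩ := h1
    rw [m_nl]; exact (canon_node_iff.mp ht).2.1
  by_cases h2 : ∃ u, t = node u s
  · obtain ⟨u, rfl⟩ := h2
    have hu : u ≠ s := fun h => h1 ⟨s, by rw [h]⟩
    rw [m_nr hu]; exact (canon_node_iff.mp ht).1
  by_cases h3 : ∃ u, s = node t u
  · obtain ⟨u, rfl⟩ := h3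
    rw [m_ln]; exact (canon_node_iff.mp hs).2.1
  by_cases h4 : ∃ u, s = node u t
  · obtain ⟨u, rfl⟩ := h4
    have hu : u ≠ t := fun h => h3 ⟨t, by rw [h]⟩
    rw [m_rn hu]; exact (canon_node_iff.mp hs).1
  · have hcs : ¬ isChild s t := fun h => by
      rcases isChild_iff.mp h with h | h
      exacts [h1 h, h2 h]
    have hct : ¬ isChild t s := fun h => by
      rcases isChild_iff.mp h with h | h
      exacts [h3 h, h4 h]
    rw [m_gen hst hcs hct]
    rcases opair_spec s t with h | h <;> rw [h] <;>
      rw [canon_node_iff]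
    · exact ⟨hs, ht, h, hst, hcs, hct⟩
    · exact ⟨ht, hs, by rw [opair_swap]; exact h, Ne.symm hst, hct, hcs⟩

lemma m_lcancel {s t : T α} (hs : Canon s) (ht : Canon t) : m s (m s t) = t := by
  by_cases hst : s = t
  · subst hst; rw [m_self, m_self]
  by_cases h1 : ∃ u, t = node s u
  · obtain ⟨u, rfl⟩ := h1
    obtain ⟨hcs, hcu, hop, hne, hc1, hc2⟩ := canon_node_iff.mp ht
    rw [m_nl, m_gen hne hc1 hc2, hop]
  by_cases h2 : ∃ u, t = node u s
  · obtain ⟨u, rfl⟩ := h2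
    have hu : u ≠ s := fun h => h1 ⟨s, by rw [h]⟩
    obtain ⟨hcu, hcs, hop, hne, hc1, hc2⟩ := canon_node_iff.mp ht
    rw [m_nr hu, m_gen (Ne.symm hne) hc2 hc1, opair_swap, hop]
  by_cases h3 : ∃ u, s = node t u
  · obtain ⟨u, rfl⟩ := h3
    obtain ⟨hct, hcu, hop, hne, hc1, hc2⟩ := canon_node_iff.mp hs
    rw [m_ln, m_rn hne]
  by_cases h4 : ∃ u, s = node u t
  · obtain ⟨u, rfl⟩ := h4
    have hu : u ≠ t := fun h => h3 ⟨t, by rw [h]⟩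
    rw [m_rn hu, m_ln]
  · have hcs : ¬ isChild s t := fun h => by
      rcases isChild_iff.mp h with h | h
      exacts [h1 h, h2 h]
    have hct : ¬ isChild t s := fun h => by
      rcases isChild_iff.mp h with h | h
      exacts [h3 h, h4 h]
    rw [m_gen hst hcs hct]
    rcases opair_spec s t with h | h <;> rw [h]
    · exact m_nl s t
    · exact m_nr (Ne.symm hst)

lemma m_shape {s t : T α} (hst : s ≠ t)
    (h1 : size s ≤ size (m s t)) (h2 : size t ≤ size (m s t)) :
    m s t = node s t ∨ m s t = node t s := by
  by_cases e1 : ∃ u, t = node s u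
  · obtain ⟨u, rfl⟩ := e1
    rw [m_nl] at h2
    have := size_lt_right s u
    omega
  by_cases e2 : ∃ u, t = node u s
  · obtain ⟨u, rfl⟩ := e2
    have hu : u ≠ s := fun h => e1 ⟨s, by rw [h]⟩
    rw [m_nr hu] at h2
    have := size_lt_left u s
    omega
  by_cases e3 : ∃ u, s = node t u
  · obtain ⟨u, rfl⟩ := e3
    rw [m_ln] at h1
    have := size_lt_right t u
    omega
  by_cases e4 : ∃ u, s = node u t
  · obtain ⟨u, rfl⟩ := e4
    have hu : u ≠ t := fun h => e3 ⟨t, by rw [h]⟩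
    rw [m_rn hu] at h1
    have := size_lt_left u t
    omega
  · have hcs : ¬ isChild s t := fun h => by
      rcases isChild_iff.mp h with h | h
      exacts [e1 h, e2 h]
    have hct : ¬ isChild t s := fun h => by
      rcases isChild_iff.mp h with h | h
      exacts [e3 h, e4 h]
    rw [m_gen hst hcs hct]
    rcases opair_spec s t with h | h <;> rw [h]
    · exact Or.inl rfl
    · exact Or.inr rfl

/-- Evaluation of trees in a magma. -/
def ev {N : Type} [Mul N] (f : α → N) : T α → N
  | var a => f a
  | node s t => ev f s * ev f t

lemma ev_m {N : Type} [Steiner N] (f : α → N) {s t : T α}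
    (hs : Canon s) (ht : Canon t) : ev f (m s t) = ev f s * ev f t := by
  by_cases hst : s = t
  · subst hst; rw [m_self, Steiner.idem]
  by_cases h1 : ∃ u, t = node s u
  · obtain ⟨u, rfl⟩ := h1
    rw [m_nl]
    simp only [ev]
    rw [Steiner.lcancel]
  by_cases h2 : ∃ u, t = node u s
  · obtain ⟨u, rfl⟩ := h2
    have hu : u ≠ s := fun h => h1 ⟨s, by rw [h]⟩
    rw [m_nr hu]
    simp only [ev]
    rw [Steiner.comm (ev f u) (ev f s), Steiner.lcancel]
  by_cases h3 : ∃ u, s = node t u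
  · obtain ⟨u, rfl⟩ := h3
    rw [m_ln]
    simp only [ev]
    rw [Steiner.comm (ev f t * ev f u) (ev f t), Steiner.lcancel]
  by_cases h4 : ∃ u, s = node u t
  · obtain ⟨u, rfl⟩ := h4
    have hu : u ≠ t := fun h => h3 ⟨t, by rw [h]⟩
    rw [m_rn hu]
    simp only [ev]
    rw [Steiner.comm (ev f u) (ev f t), Steiner.comm (ev f t * ev f u) (ev f t),
      Steiner.lcancel]
  · have hcs : ¬ isChild s t := fun h => by
      rcases isChild_iff.mp h with h | h
      exacts [h1 h, h2 h]
    have hct : ¬ isChild t s := fun h => by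
      rcases isChild_iff.mp h with h | h
      exacts [h3 h, h4 h]
    rw [m_gen hst hcs hct]
    rcases opair_spec s t with h | h <;> rw [h] <;> simp only [ev]
    rw [Steiner.comm]

end T

/-- The free Steiner quasigroup on `α` : canonical reduced trees. -/
def FT (α : Type) : Type := {t : T α // T.Canon t}

noncomputable instance {α : Type} : Steiner (FT α) where
  mul s t := ⟨T.m s.1 t.1, T.m_canon s.2 t.2⟩
  comm s t := Subtype.ext T.m_comm
  idem s := Subtype.ext (T.m_self s.1)
  lcancel s t := Subtype.ext (T.m_lcancel s.2 t.2)

lemma FT_mul_val {α : Type} (x y : FT α) : (x * y).1 = T.m x.1 y.1 := rfl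

end SFree

/-- Free Steiner quasigroups are unconfined: every finite non-empty subset
contains an element lying in at most one block of that subset. -/
theorem stmt9 {M : Type} [Steiner M] (hM : ∃ A : Set M, FreeBase A)
    (A' : Finset M) (hne : A'.Nonempty) :
    ∃ a ∈ A', ∀ b c b' c' : M, b ∈ A' → c ∈ A' → b' ∈ A' → c' ∈ A' →
      b ≠ c → a = b * c → b' ≠ c' → a = b' * c' →
      ({b, c} : Set M) = {b', c'} := by
  classical
  obtain ⟨A, hcl, hU⟩ := hM
  obtain ⟨g, hg⟩ := hU (SFree.FT ↥A) (fun a => ⟨SFree.T.var a, SFree.T.canon_var a⟩)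
  have hsec : ∀ x : M, SFree.T.ev (Subtype.val : ↥A → M) (g x).1 = x := by
    intro x
    have hx : mem_closure A x := by
      have : x ∈ closure A := by rw [hcl]; trivial
      exact this
    induction hx with
    | @base a h =>
      have h2 : g a = ⟨SFree.T.var ⟨a, h⟩, SFree.T.canon_var _⟩ := hg ⟨a, h⟩
      rw [h2]
      rfl
    | @mul a b _ _ iha ihb =>
      have h2 : (g (a * b)).1 = SFree.T.m (g a).1 (g b).1 := by
        rw [map_mul g a b]; rfl
      rw [h2, SFree.T.ev_m _ (g a).2 (g b).2, iha, ihb]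
  have hinj : Function.Injective g := fun x y h => by
    rw [← hsec x, ← hsec y, h]
  obtain ⟨a, haA, hmax⟩ := A'.exists_max_image (fun x => (g x).1.size) hne
  refine ⟨a, haA, ?_⟩
  intro b c b' c' hb hc hb' hc' hbc habc hbc' habc'
  have key : ∀ p q : M, p ∈ A' → q ∈ A' → p ≠ q → a = p * q →
      (g a).1 = SFree.T.node (g p).1 (g q).1 ∨
      (g a).1 = SFree.T.node (g q).1 (g p).1 := by
    intro p q hp hq hpq hapq
    have hga : (g a).1 = SFree.T.m (g p).1 (g q).1 := by
      rw [hapq, map_mul g p q]; rfl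
    have hne : (g p).1 ≠ (g q).1 := by
      intro h
      exact hpq (hinj (Subtype.ext h))
    have h1 : ((g p).1).size ≤ ((g a).1).size := hmax p hp
    have h2 : ((g q).1).size ≤ ((g a).1).size := hmax q hq
    rw [hga] at h1 h2 ⊢
    exact SFree.T.m_shape hne h1 h2
  have k1 := key b c hb hc hbc habc
  have k2 := key b' c' hb' hc' hbc' habc'
  have hgpair : ((g b).1 = (g b').1 ∧ (g c).1 = (g c').1) ∨
      ((g b).1 = (g c').1 ∧ (g c).1 = (g b').1) := by
    rcases k1 with k1 | k1 <;> rcases k2 with k2 | k2 <;>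
      rw [k1] at k2 <;> injection k2 with e1 e2
    · exact Or.inl ⟨e1, e2⟩
    · exact Or.inr ⟨e1, e2⟩
    · exact Or.inr ⟨e2, e1⟩
    · exact Or.inl ⟨e2, e1⟩
  rcases hgpair with ⟨e1, e2⟩ | ⟨e1, e2⟩
  · rw [hinj (Subtype.ext e1), hinj (Subtype.ext e2)]
  · rw [hinj (Subtype.ext e1), hinj (Subtype.ext e2)]
    exact Set.pair_comm c' b'
end
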